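/- arXiv:2510.21268 — 4 statements merged into one kernel-verified Lean document; each statement's English description precedes it below -/
import Mathlib

section
/- There exists a unique minimizer of the Thomas–Fermi functional: there is exactly one measurable ρ : ℝ³ → [0,∞) with ρ ∈ L^{5/3}(ℝ³), ∫_{ℝ³} V ρ < ∞ and ∫_{ℝ³} ρ = 1 such that 𝓔^TF[ρ] = E^TF. -/
open MeasureTheory Filter Topology

noncomputable section

/-- Position space `ℝ³`. -/
abbrev E3 := EuclideanSpace ℝ (Fin 3)

/-- The Thomas–Fermi constant `c_TF = (3/5)(6π²)^{2/3}`. -/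
def cTF : ℝ := (3/5) * (6 * Real.pi ^ 2) ^ ((2:ℝ)/3)

/-- The Thomas–Fermi functional `𝓔^TF[ρ] = 2^{-2/3} c_TF ∫ ρ^{5/3} + ∫ V ρ`. -/
def TFfun (V ρ : E3 → ℝ) : ℝ :=
  (2:ℝ) ^ (-(2:ℝ)/3) * cTF * (∫ x, ρ x ^ ((5:ℝ)/3)) + ∫ x, V x * ρ x

/-- Admissible densities for the Thomas–Fermi problem: nonnegative, in `L^{5/3}`,
with finite potential energy and total mass one. -/
def IsTFAdmissible (V ρ : E3 → ℝ) : Prop :=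
  Measurable ρ ∧ (∀ x, 0 ≤ ρ x) ∧ MemLp ρ (5/3) volume ∧
    Integrable (fun x => V x * ρ x) volume ∧ (∫ x, ρ x) = 1

/-- The Thomas–Fermi energy `E^TF`. -/
def TFenergy (V : E3 → ℝ) : ℝ :=
  sInf { e | ∃ ρ, IsTFAdmissible V ρ ∧ e = TFfun V ρ }

/-- `ρ` is a minimizer of the Thomas–Fermi functional. -/
def IsTFMinimizer (V ρ : E3 → ℝ) : Prop :=
  IsTFAdmissible V ρ ∧ TFfun V ρ = TFenergy V

/-- `V` is locally bounded (`V ∈ L^∞_loc`). -/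
def LocBounded (V : E3 → ℝ) : Prop :=
  ∀ K : Set E3, IsCompact K → ∃ C : ℝ, ∀ x ∈ K, |V x| ≤ C

/-! ### Auxiliary development -/

/-- The coefficient in front of the kinetic term. -/
def aTF : ℝ := (2:ℝ) ^ (-(2:ℝ)/3) * cTF

/-- `bTF = (5/3) aTF`, the derivative coefficient. -/
def bTF : ℝ := (5/3) * aTF

lemma aTF_pos : 0 < aTF := by
  unfold aTF cTF
  positivity

lemma bTF_pos : 0 < bTF := by
  unfold bTF; linarith [aTF_pos]

lemma rpow53_deriv (x : ℝ) :
    HasDerivAt (fun y : ℝ => y ^ ((5:ℝ)/3)) ((5/3) * x ^ ((2:ℝ)/3)) x := by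
  have h := Real.hasDerivAt_rpow_const (x := x) (p := (5:ℝ)/3) (Or.inr (by norm_num))
  convert h using 2
  norm_num

lemma tangent_strict {s t : ℝ} (hs : 0 ≤ s) (ht : 0 ≤ t) (hst : s ≠ t) :
    (5/3) * s ^ ((2:ℝ)/3) * (t - s) < t ^ ((5:ℝ)/3) - s ^ ((5:ℝ)/3) := by
  set g : ℝ → ℝ := fun x => x ^ ((5:ℝ)/3) - (5/3) * s ^ ((2:ℝ)/3) * x with hg
  have hderiv : ∀ x : ℝ, HasDerivAt g ((5/3) * x ^ ((2:ℝ)/3) - (5/3) * s ^ ((2:ℝ)/3)) x := by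
    intro x
    exact (rpow53_deriv x).sub
      (by simpa using (hasDerivAt_id x).const_mul ((5:ℝ)/3 * s ^ ((2:ℝ)/3)))
  have hcont : Continuous g := by
    have : Differentiable ℝ g := fun x => (hderiv x).differentiableAt
    exact this.continuous
  have key : g s < g t := by
    rcases lt_or_gt_of_ne hst with h | h
    · have mono : StrictMonoOn g (Set.Icc s t) := by
        apply strictMonoOn_of_deriv_pos (convex_Icc s t) hcont.continuousOn
        intro x hx
        rw [interior_Icc] at hx
        rw [(hderiv x).deriv]
        have : s ^ ((2:ℝ)/3) < x ^ ((2:ℝ)/3) := Real.rpow_lt_rpow hs hx.1 (by norm_num)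
        nlinarith
      exact mono (Set.left_mem_Icc.2 h.le) (Set.right_mem_Icc.2 h.le) h
    · have anti : StrictAntiOn g (Set.Icc t s) := by
        apply strictAntiOn_of_deriv_neg (convex_Icc t s) hcont.continuousOn
        intro x hx
        rw [interior_Icc] at hx
        rw [(hderiv x).deriv]
        have : x ^ ((2:ℝ)/3) < s ^ ((2:ℝ)/3) :=
          Real.rpow_lt_rpow (le_trans ht hx.1.le) hx.2 (by norm_num)
        nlinarith
      exact anti (Set.left_mem_Icc.2 h.le) (Set.right_mem_Icc.2 h.le) h
  simp only [hg] at key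
  nlinarith [key]

lemma tangent_le {s t : ℝ} (hs : 0 ≤ s) (ht : 0 ≤ t) :
    (5/3) * s ^ ((2:ℝ)/3) * (t - s) ≤ t ^ ((5:ℝ)/3) - s ^ ((5:ℝ)/3) := by
  rcases eq_or_ne s t with rfl | h
  · simp
  · exact (tangent_strict hs ht h).le

/-- The candidate minimizer at chemical potential `μ`. -/
def tfRho (V : E3 → ℝ) (μ : ℝ) : E3 → ℝ :=
  fun x => (max (μ - V x) 0 / bTF) ^ ((3:ℝ)/2)

lemma tfRho_nonneg (V : E3 → ℝ) (μ : ℝ) (x : E3) : 0 ≤ tfRho V μ x :=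
  Real.rpow_nonneg (div_nonneg (le_max_right _ _) bTF_pos.le) _

lemma tfRho_meas {V : E3 → ℝ} (hVm : Measurable V) (μ : ℝ) : Measurable (tfRho V μ) := by
  unfold tfRho
  fun_prop

lemma tfRho_le {V : E3 → ℝ} (hV0 : ∀ x, 0 ≤ V x) (μ : ℝ) (x : E3) :
    tfRho V μ x ≤ (max μ 0 / bTF) ^ ((3:ℝ)/2) := by
  apply Real.rpow_le_rpow (div_nonneg (le_max_right _ _) bTF_pos.le) ?_ (by norm_num)
  gcongr
  · exact bTF_pos.le
  · linarith [hV0 x]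

lemma tfRho_mono (V : E3 → ℝ) {μ₁ μ₂ : ℝ} (h : μ₁ ≤ μ₂) (x : E3) :
    tfRho V μ₁ x ≤ tfRho V μ₂ x := by
  apply Real.rpow_le_rpow (div_nonneg (le_max_right _ _) bTF_pos.le) ?_ (by norm_num)
  gcongr
  exact bTF_pos.le

lemma tfRho_zero_of_le {V : E3 → ℝ} {μ : ℝ} {x : E3} (h : μ ≤ V x) :
    tfRho V μ x = 0 := by
  unfold tfRho
  rw [max_eq_right (by linarith), zero_div, Real.zero_rpow (by norm_num)]


lemma exists_compact_ge {V : E3 → ℝ} (hVinf : Tendsto V (cocompact E3) atTop) (μ : ℝ) :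
    ∃ K : Set E3, IsCompact K ∧ ∀ x ∉ K, μ ≤ V x := by
  have h : {x : E3 | μ ≤ V x} ∈ cocompact E3 := hVinf.eventually (eventually_ge_atTop μ)
  rcases mem_cocompact.1 h with ⟨K, hK, hsub⟩
  exact ⟨K, hK, fun x hx => hsub hx⟩

lemma tfRho_integrable {V : E3 → ℝ} (hVm : Measurable V) (hV0 : ∀ x, 0 ≤ V x)
    (hVinf : Tendsto V (cocompact E3) atTop) (μ : ℝ) :
    Integrable (tfRho V μ) volume := by
  obtain ⟨K, hK, hKV⟩ := exists_compact_ge hVinf μ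
  refine Integrable.mono' (g := K.indicator fun _ => (max μ 0 / bTF) ^ ((3:ℝ)/2)) ?_
    (tfRho_meas hVm μ).aestronglyMeasurable ?_
  · rw [integrable_indicator_iff hK.measurableSet]
    exact integrableOn_const hK.measure_lt_top.ne
  · filter_upwards with x
    rw [Real.norm_of_nonneg (tfRho_nonneg V μ x)]
    by_cases hx : x ∈ K
    · rw [Set.indicator_of_mem hx]; exact tfRho_le hV0 μ x
    · rw [Set.indicator_of_notMem hx, tfRho_zero_of_le (hKV x hx)]

/-- The total mass of the candidate minimizer. -/
def tfMass (V : E3 → ℝ) (μ : ℝ) : ℝ := ∫ x, tfRho V μ x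

lemma tfRho_contAt (V : E3 → ℝ) (x : E3) (μ₀ : ℝ) :
    ContinuousAt (fun μ => tfRho V μ x) μ₀ := by
  have hinner : Continuous (fun μ : ℝ => max (μ - V x) 0 / bTF) :=
    ((continuous_id.sub continuous_const).max continuous_const).div_const bTF
  exact (Real.continuousAt_rpow_const _ _ (Or.inr (by norm_num))).comp hinner.continuousAt

lemma tfMass_continuous {V : E3 → ℝ} (hVm : Measurable V) (hV0 : ∀ x, 0 ≤ V x)
    (hVinf : Tendsto V (cocompact E3) atTop) : Continuous (tfMass V) := by
  rw [continuous_iff_continuousAt]; intro μ₀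
  obtain ⟨K, hK, hKV⟩ := exists_compact_ge hVinf (μ₀ + 1)
  apply continuousAt_of_dominated
    (bound := K.indicator fun _ => (max (μ₀+1) 0 / bTF) ^ ((3:ℝ)/2))
  · filter_upwards with μ using (tfRho_meas hVm μ).aestronglyMeasurable
  · filter_upwards [eventually_le_nhds (lt_add_one μ₀)] with μ hμ
    filter_upwards with x
    rw [Real.norm_of_nonneg (tfRho_nonneg V μ x)]
    by_cases hx : x ∈ K
    · rw [Set.indicator_of_mem hx]
      exact (tfRho_mono V hμ x).trans (tfRho_le hV0 _ x)
    · rw [Set.indicator_of_notMem hx, tfRho_zero_of_le (le_trans hμ (hKV x hx))]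
  · rw [integrable_indicator_iff hK.measurableSet]
    exact integrableOn_const hK.measure_lt_top.ne
  · filter_upwards with x using tfRho_contAt V x μ₀

lemma tfMass_zero {V : E3 → ℝ} (hV0 : ∀ x, 0 ≤ V x) : tfMass V 0 = 0 := by
  unfold tfMass
  rw [show (fun x => tfRho V 0 x) = fun _ => (0:ℝ) from funext fun x =>
    tfRho_zero_of_le (hV0 x)]
  simp

lemma exists_mass_ge_one {V : E3 → ℝ} (hVm : Measurable V) (hVloc : LocBounded V)
    (hV0 : ∀ x, 0 ≤ V x) (hVinf : Tendsto V (cocompact E3) atTop) :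
    ∃ M : ℝ, 0 ≤ M ∧ 1 ≤ tfMass V M := by
  set B : Set E3 := Metric.closedBall 0 1 with hB
  have hBc : IsCompact B := isCompact_closedBall _ _
  obtain ⟨C₀, hC₀⟩ := hVloc B hBc
  set C : ℝ := max C₀ 0 with hC
  have hC0 : 0 ≤ C := le_max_right _ _
  set vol : ℝ := (volume B).toReal with hvol
  have hvolpos : 0 < vol := by
    rw [hvol]
    exact ENNReal.toReal_pos (Metric.measure_closedBall_pos volume _ one_pos).ne'
      hBc.measure_lt_top.ne
  set r : ℝ := vol⁻¹ ^ ((2:ℝ)/3) with hr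
  have hrpos : 0 < r := Real.rpow_pos_of_pos (inv_pos.2 hvolpos) _
  set M : ℝ := C + bTF * r with hM
  have hM0 : 0 ≤ M := add_nonneg hC0 (mul_nonneg bTF_pos.le hrpos.le)
  refine ⟨M, hM0, ?_⟩
  have hpt : ∀ x ∈ B, r ^ ((3:ℝ)/2) ≤ tfRho V M x := by
    intro x hx
    have hVx : V x ≤ C := le_trans (le_of_abs_le (hC₀ x hx)) (le_max_left _ _)
    have h1 : bTF * r ≤ max (M - V x) 0 := le_trans (by rw [hM]; linarith) (le_max_left _ _)
    have : r ≤ max (M - V x) 0 / bTF := (le_div_iff₀ bTF_pos).2 (by linarith [h1])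
    exact Real.rpow_le_rpow hrpos.le this (by norm_num)
  have hint : ∫ x, (B.indicator fun _ => r ^ ((3:ℝ)/2)) x ≤ tfMass V M := by
    apply integral_mono ?_ (tfRho_integrable hVm hV0 hVinf M)
    · intro x
      by_cases hx : x ∈ B
      · rw [Set.indicator_of_mem hx]; exact hpt x hx
      · rw [Set.indicator_of_notMem hx]; exact tfRho_nonneg V M x
    · rw [integrable_indicator_iff hBc.measurableSet]
      exact integrableOn_const hBc.measure_lt_top.ne
  have hval : ∫ x, (B.indicator fun _ => r ^ ((3:ℝ)/2)) x = vol * r ^ ((3:ℝ)/2) := by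
    rw [integral_indicator_const _ hBc.measurableSet]
    simp [hvol, smul_eq_mul, Measure.real]
  have hr32 : r ^ ((3:ℝ)/2) = vol⁻¹ := by
    rw [hr, ← Real.rpow_mul (inv_nonneg.2 hvolpos.le)]
    norm_num
  rw [hval, hr32, mul_inv_cancel₀ hvolpos.ne'] at hint
  exact hint

lemma exists_mu {V : E3 → ℝ} (hVm : Measurable V) (hVloc : LocBounded V)
    (hV0 : ∀ x, 0 ≤ V x) (hVinf : Tendsto V (cocompact E3) atTop) :
    ∃ μ : ℝ, 0 ≤ μ ∧ tfMass V μ = 1 := by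
  obtain ⟨M, hM0, hM1⟩ := exists_mass_ge_one hVm hVloc hV0 hVinf
  have h := intermediate_value_Icc hM0 ((tfMass_continuous hVm hV0 hVinf).continuousOn)
  have h1 : (1:ℝ) ∈ Set.Icc (tfMass V 0) (tfMass V M) := by
    rw [tfMass_zero hV0]; exact ⟨zero_le_one, hM1⟩
  obtain ⟨μ, hμ, hμ1⟩ := h h1
  exact ⟨μ, hμ.1, hμ1⟩

lemma key_pointwise (μ v t : ℝ) (ht : 0 ≤ t) :
    (0 ≤ aTF * t ^ ((5:ℝ)/3) - aTF * ((max (μ - v) 0 / bTF) ^ ((3:ℝ)/2)) ^ ((5:ℝ)/3)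
        + (v - μ) * (t - (max (μ - v) 0 / bTF) ^ ((3:ℝ)/2))) ∧
    (t ≠ (max (μ - v) 0 / bTF) ^ ((3:ℝ)/2) →
      0 < aTF * t ^ ((5:ℝ)/3) - aTF * ((max (μ - v) 0 / bTF) ^ ((3:ℝ)/2)) ^ ((5:ℝ)/3)
        + (v - μ) * (t - (max (μ - v) 0 / bTF) ^ ((3:ℝ)/2))) := by
  set m : ℝ := max (μ - v) 0 with hmdef
  have hm : 0 ≤ m := le_max_right _ _
  set s : ℝ := (m / bTF) ^ ((3:ℝ)/2) with hsdef
  have hs : 0 ≤ s := Real.rpow_nonneg (div_nonneg hm bTF_pos.le) _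
  have hs23 : bTF * s ^ ((2:ℝ)/3) = m := by
    have h1 : s ^ ((2:ℝ)/3) = m / bTF := by
      rw [hsdef, ← Real.rpow_mul (div_nonneg hm bTF_pos.le)]
      norm_num
    rw [h1, mul_comm, div_mul_cancel₀ m bTF_pos.ne']
  have hb : bTF = (5/3) * aTF := rfl
  have hsecond : 0 ≤ (m + v - μ) * (t - s) := by
    rcases le_or_gt s t with h | h
    · have : μ - v ≤ m := le_max_left _ _
      have : 0 ≤ m + v - μ := by linarith
      exact mul_nonneg this (by linarith)
    · -- t < s, so s > 0, so m > 0, so m = μ - v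
      have hspos : 0 < s := lt_of_le_of_lt ht h
      have hmpos : 0 < m := by
        rcases hm.lt_or_eq with h' | h'
        · exact h'
        · exfalso
          rw [hsdef, ← h', zero_div, Real.zero_rpow (by norm_num)] at hspos
          exact lt_irrefl 0 hspos
      have hmeq : m = μ - v := by
        rw [hmdef]
        rw [hmdef] at hmpos
        rcases max_cases (μ - v) 0 with ⟨h1, _⟩ | ⟨h1, _⟩
        · exact h1
        · rw [h1] at hmpos; exact absurd hmpos (lt_irrefl 0)
      rw [hmeq]
      ring_nf
      simp
  have htan := tangent_le hs ht
  have htan' : bTF * s ^ ((2:ℝ)/3) * (t - s) ≤ aTF * t ^ ((5:ℝ)/3) - aTF * s ^ ((5:ℝ)/3) := by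
    rw [hb]
    nlinarith [aTF_pos]
  rw [hs23] at htan'
  constructor
  · nlinarith
  · intro hne
    have hts := tangent_strict hs ht (fun h => hne h.symm)
    have htan2 : m * (t - s) < aTF * t ^ ((5:ℝ)/3) - aTF * s ^ ((5:ℝ)/3) := by
      rw [← hs23, hb]
      nlinarith [aTF_pos]
    nlinarith

lemma toReal53 : ((5:ENNReal)/3).toReal = (5:ℝ)/3 := by
  rw [ENNReal.toReal_div]
  norm_num

lemma integrable_rpow_of_memℒp {ρ : E3 → ℝ} (h0 : ∀ x, 0 ≤ ρ x)
    (h : MemLp ρ (5/3) volume) :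
    Integrable (fun x => ρ x ^ ((5:ℝ)/3)) volume := by
  have h1 := h.norm_rpow (by norm_num) (by simp [ENNReal.div_eq_top])
  rw [memLp_one_iff_integrable] at h1
  refine h1.congr (Filter.Eventually.of_forall fun x => ?_)
  simp only [toReal53, Real.norm_of_nonneg (h0 x)]

lemma tfRho_memℒp {V : E3 → ℝ} (hVm : Measurable V) (hV0 : ∀ x, 0 ≤ V x)
    (hVinf : Tendsto V (cocompact E3) atTop) (μ : ℝ) :
    MemLp (tfRho V μ) (5/3) volume := by
  obtain ⟨K, hK, hKV⟩ := exists_compact_ge hVinf μ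
  set c : ℝ := (max μ 0 / bTF) ^ ((3:ℝ)/2) with hc
  have hc0 : 0 ≤ c := Real.rpow_nonneg (div_nonneg (le_max_right _ _) bTF_pos.le) _
  refine MemLp.of_le (memLp_indicator_const (5/3) hK.measurableSet c
    (Or.inr hK.measure_lt_top.ne)) (tfRho_meas hVm μ).aestronglyMeasurable ?_
  filter_upwards with x
  by_cases hx : x ∈ K
  · rw [Set.indicator_of_mem hx, Real.norm_of_nonneg (tfRho_nonneg V μ x),
      Real.norm_of_nonneg hc0]
    exact tfRho_le hV0 μ x
  · rw [Set.indicator_of_notMem hx, tfRho_zero_of_le (hKV x hx)]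

lemma tfRho_mulV_integrable {V : E3 → ℝ} (hVm : Measurable V) (hVloc : LocBounded V)
    (hV0 : ∀ x, 0 ≤ V x) (hVinf : Tendsto V (cocompact E3) atTop) (μ : ℝ) :
    Integrable (fun x => V x * tfRho V μ x) volume := by
  obtain ⟨K, hK, hKV⟩ := exists_compact_ge hVinf μ
  obtain ⟨C, hC⟩ := hVloc K hK
  set c : ℝ := (max μ 0 / bTF) ^ ((3:ℝ)/2) with hc
  have hc0 : 0 ≤ c := Real.rpow_nonneg (div_nonneg (le_max_right _ _) bTF_pos.le) _
  refine Integrable.mono' (g := K.indicator fun _ => max C 0 * c) ?_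
    (hVm.mul (tfRho_meas hVm μ)).aestronglyMeasurable ?_
  · rw [integrable_indicator_iff hK.measurableSet]
    exact integrableOn_const hK.measure_lt_top.ne
  · filter_upwards with x
    by_cases hx : x ∈ K
    · rw [Set.indicator_of_mem hx,
        Real.norm_of_nonneg (mul_nonneg (hV0 x) (tfRho_nonneg V μ x))]
      exact mul_le_mul (le_trans (le_of_abs_le (hC x hx)) (le_max_left _ _))
        (tfRho_le hV0 μ x) (tfRho_nonneg V μ x) (le_max_right _ _)
    · rw [Set.indicator_of_notMem hx, tfRho_zero_of_le (hKV x hx)]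
      simp

/-- **Existence and uniqueness of the Thomas–Fermi minimizer**: there is exactly one
(up to almost-everywhere equality) admissible density minimizing the
Thomas–Fermi functional. -/
theorem TF_minimizer_exists_unique
    (V : E3 → ℝ) (hVm : Measurable V) (hVloc : LocBounded V)
    (hV0 : ∀ x, 0 ≤ V x) (hVinf : Tendsto V (cocompact E3) atTop) :
    ∃ ρ : E3 → ℝ, IsTFMinimizer V ρ ∧
      ∀ ρ' : E3 → ℝ, IsTFMinimizer V ρ' → ρ' =ᵐ[volume] ρ := by
  obtain ⟨μ, hμ0, hμ1⟩ := exists_mu hVm hVloc hV0 hVinf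
  have hμ1' : (∫ x, tfRho V μ x) = 1 := hμ1
  have hadm : IsTFAdmissible V (tfRho V μ) :=
    ⟨tfRho_meas hVm μ, tfRho_nonneg V μ, tfRho_memℒp hVm hV0 hVinf μ,
      tfRho_mulV_integrable hVm hVloc hV0 hVinf μ, hμ1'⟩
  have hintρ : Integrable (tfRho V μ) volume := tfRho_integrable hVm hV0 hVinf μ
  have hint53 : Integrable (fun x => tfRho V μ x ^ ((5:ℝ)/3)) volume :=
    integrable_rpow_of_memℒp (tfRho_nonneg V μ) (tfRho_memℒp hVm hV0 hVinf μ)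
  have hiρ : Integrable (fun x => V x * tfRho V μ x) volume :=
    tfRho_mulV_integrable hVm hVloc hV0 hVinf μ
  have main : ∀ ρ' : E3 → ℝ, IsTFAdmissible V ρ' →
      TFfun V (tfRho V μ) ≤ TFfun V ρ' ∧
        (TFfun V ρ' ≤ TFfun V (tfRho V μ) → ρ' =ᵐ[volume] tfRho V μ) := by
    intro ρ' hadm'
    obtain ⟨hm', h0', hp', hi', h1'⟩ := hadm'
    have hintρ' : Integrable ρ' volume := by
      by_contra hcon
      rw [integral_undef hcon] at h1'
      norm_num at h1'
    have hint53' : Integrable (fun x => ρ' x ^ ((5:ℝ)/3)) volume :=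
      integrable_rpow_of_memℒp h0' hp'
    set h : E3 → ℝ := fun x => aTF * ρ' x ^ ((5:ℝ)/3) - aTF * tfRho V μ x ^ ((5:ℝ)/3)
        + (V x - μ) * (ρ' x - tfRho V μ x) with hh
    have hpt : ∀ x, 0 ≤ h x ∧ (ρ' x ≠ tfRho V μ x → 0 < h x) := fun x =>
      key_pointwise μ (V x) (ρ' x) (h0' x)
    have hinth : Integrable h volume := by
      refine Integrable.add (Integrable.sub (hint53'.const_mul aTF) (hint53.const_mul aTF)) ?_
      have hre : (fun x => (V x - μ) * (ρ' x - tfRho V μ x))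
          = fun x => (V x * ρ' x - V x * tfRho V μ x) - (μ * ρ' x - μ * tfRho V μ x) :=
        funext fun x => by ring
      rw [hre]
      exact (hi'.sub hiρ).sub ((hintρ'.const_mul μ).sub (hintρ.const_mul μ))
    have hA' : Integrable (fun x => aTF * ρ' x ^ ((5:ℝ)/3) + V x * ρ' x) volume :=
      (hint53'.const_mul aTF).add hi'
    have hA : Integrable (fun x => aTF * tfRho V μ x ^ ((5:ℝ)/3) + V x * tfRho V μ x) volume :=
      (hint53.const_mul aTF).add hiρ
    have hEq' : ∫ x, (aTF * ρ' x ^ ((5:ℝ)/3) + V x * ρ' x) = TFfun V ρ' := by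
      rw [integral_add (hint53'.const_mul aTF) hi', integral_const_mul]
      simp [TFfun, aTF]
    have hEqρ : ∫ x, (aTF * tfRho V μ x ^ ((5:ℝ)/3) + V x * tfRho V μ x)
        = TFfun V (tfRho V μ) := by
      rw [integral_add (hint53.const_mul aTF) hiρ, integral_const_mul]
      simp [TFfun, aTF]
    have hdecomp : h = fun x => (aTF * ρ' x ^ ((5:ℝ)/3) + V x * ρ' x)
        - (aTF * tfRho V μ x ^ ((5:ℝ)/3) + V x * tfRho V μ x) - μ * (ρ' x - tfRho V μ x) :=
      funext fun x => by simp only [hh]; ring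
    have hinteq : ∫ x, h x = TFfun V ρ' - TFfun V (tfRho V μ) := by
      have i3 : Integrable (fun x => aTF * ρ' x ^ ((5:ℝ)/3) + V x * ρ' x
          - (aTF * tfRho V μ x ^ ((5:ℝ)/3) + V x * tfRho V μ x)) volume := hA'.sub hA
      have i4 : Integrable (fun x => μ * (ρ' x - tfRho V μ x)) volume :=
        (hintρ'.sub hintρ).const_mul μ
      have e1 : ∫ x, h x = (∫ x, (aTF * ρ' x ^ ((5:ℝ)/3) + V x * ρ' x
            - (aTF * tfRho V μ x ^ ((5:ℝ)/3) + V x * tfRho V μ x)))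
          - ∫ x, μ * (ρ' x - tfRho V μ x) := by
        rw [hdecomp]
        exact integral_sub i3 i4
      have e2 : ∫ x, (aTF * ρ' x ^ ((5:ℝ)/3) + V x * ρ' x
            - (aTF * tfRho V μ x ^ ((5:ℝ)/3) + V x * tfRho V μ x))
          = (∫ x, (aTF * ρ' x ^ ((5:ℝ)/3) + V x * ρ' x))
            - ∫ x, (aTF * tfRho V μ x ^ ((5:ℝ)/3) + V x * tfRho V μ x) := integral_sub hA' hA
      have e3 : ∫ x, μ * (ρ' x - tfRho V μ x) = 0 := by
        rw [integral_const_mul]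
        have e4 : ∫ x, (ρ' x - tfRho V μ x) = (∫ x, ρ' x) - ∫ x, tfRho V μ x :=
          integral_sub hintρ' hintρ
        rw [e4, h1', hμ1']
        ring
      rw [e1, e2, e3, hEq', hEqρ]
      ring
    have hnn : 0 ≤ ∫ x, h x := integral_nonneg fun x => (hpt x).1
    constructor
    · linarith [hinteq ▸ hnn]
    · intro hle
      have hz : ∫ x, h x = 0 := le_antisymm (by rw [hinteq]; linarith) hnn
      have hae := (integral_eq_zero_iff_of_nonneg (fun x => (hpt x).1) hinth).1 hz
      filter_upwards [hae] with x hx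
      by_contra hne
      have hlt := (hpt x).2 hne
      rw [Pi.zero_apply] at hx
      rw [hx] at hlt
      exact lt_irrefl 0 hlt
  have hmem : TFfun V (tfRho V μ) ∈ {e | ∃ ρ'', IsTFAdmissible V ρ'' ∧ e = TFfun V ρ''} :=
    ⟨tfRho V μ, hadm, rfl⟩
  have hlb : ∀ e ∈ {e | ∃ ρ'', IsTFAdmissible V ρ'' ∧ e = TFfun V ρ''},
      TFfun V (tfRho V μ) ≤ e := by
    rintro e ⟨ρ'', h'', rfl⟩
    exact (main ρ'' h'').1
  have hEnergy : TFfun V (tfRho V μ) = TFenergy V :=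
    le_antisymm (le_csInf ⟨_, hmem⟩ hlb) (csInf_le ⟨_, fun e he => hlb e he⟩ hmem)
  refine ⟨tfRho V μ, ⟨hadm, hEnergy⟩, ?_⟩
  intro ρ' hmin'
  exact (main ρ' hmin'.1).2 (le_of_eq (hmin'.2.trans hEnergy.symm))
end
end

section
/- There exists a Lagrange multiplier λ_TF ∈ ℝ such that 2^{−2/3}·(5/3)·c_TF·(ρ^TF)^{2/3} + V = λ_TF almost everywhere on the set {ρ^TF > 0}, and V ≥ λ_TF almost everywhere on the set {ρ^TF = 0}. -/
open MeasureTheory Filter Topology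
open scoped ENNReal

noncomputable section

namespace TFaux

lemma rpow23_subadd (x y : ℝ) (hx : 0 ≤ x) (hy : 0 ≤ y) :
    (x + y) ^ ((2:ℝ)/3) ≤ x ^ ((2:ℝ)/3) + y ^ ((2:ℝ)/3) := by
  have h := NNReal.rpow_add_le_add_rpow x.toNNReal y.toNNReal (by norm_num)
    (by norm_num : (2:ℝ)/3 ≤ 1)
  have hxy : ((x.toNNReal + y.toNNReal : NNReal) : ℝ) = x + y := by
    simp [Real.coe_toNNReal, hx, hy]
  calc (x + y) ^ ((2:ℝ)/3) = ((x.toNNReal + y.toNNReal : NNReal) : ℝ) ^ ((2:ℝ)/3) := by rw [hxy]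
    _ = ((x.toNNReal + y.toNNReal : NNReal) ^ ((2:ℝ)/3) : NNReal) := by rw [NNReal.coe_rpow]
    _ ≤ ((x.toNNReal ^ ((2:ℝ)/3) + y.toNNReal ^ ((2:ℝ)/3) : NNReal) : ℝ) := by exact_mod_cast h
    _ = x ^ ((2:ℝ)/3) + y ^ ((2:ℝ)/3) := by
        push_cast [NNReal.coe_rpow, Real.coe_toNNReal x hx, Real.coe_toNNReal y hy]; ring

lemma mvt53 (a b : ℝ) (ha : 0 ≤ a) (hab : a ≤ b) :
    5/3 * a ^ ((2:ℝ)/3) * (b - a) ≤ b ^ ((5:ℝ)/3) - a ^ ((5:ℝ)/3) ∧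
    b ^ ((5:ℝ)/3) - a ^ ((5:ℝ)/3) ≤ 5/3 * b ^ ((2:ℝ)/3) * (b - a) := by
  rcases eq_or_lt_of_le hab with rfl | hlt
  · simp
  have hcont : ContinuousOn (fun x : ℝ => x ^ ((5:ℝ)/3)) (Set.Icc a b) :=
    (Real.continuous_rpow_const (by norm_num)).continuousOn
  have hderiv : ∀ x ∈ Set.Ioo a b,
      HasDerivAt (fun x : ℝ => x ^ ((5:ℝ)/3)) (5/3 * x ^ ((2:ℝ)/3)) x := by
    intro x hx
    have := Real.hasDerivAt_rpow_const (x := x) (p := (5:ℝ)/3) (Or.inr (by norm_num))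
    convert this using 1
    norm_num
  obtain ⟨c, hc, hceq⟩ := exists_hasDerivAt_eq_slope _ _ hlt hcont hderiv
  have hc0 : 0 ≤ c := le_trans ha hc.1.le
  have hslope : b ^ ((5:ℝ)/3) - a ^ ((5:ℝ)/3) = 5/3 * c ^ ((2:ℝ)/3) * (b - a) := by
    rw [eq_div_iff (sub_ne_zero.mpr hlt.ne')] at hceq
    linarith [hceq]
  have h1 : a ^ ((2:ℝ)/3) ≤ c ^ ((2:ℝ)/3) := Real.rpow_le_rpow ha hc.1.le (by norm_num)
  have h2 : c ^ ((2:ℝ)/3) ≤ b ^ ((2:ℝ)/3) := Real.rpow_le_rpow hc0 hc.2.le (by norm_num)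
  constructor <;> rw [hslope] <;> nlinarith [sub_pos.mpr hlt]

def kappa : ℝ := (2:ℝ) ^ (-(2:ℝ)/3) * (5/3) * cTF

lemma kappa_def : kappa = (2:ℝ) ^ (-(2:ℝ)/3) * (5/3) * cTF := rfl

lemma cTF_pos : (0:ℝ) < cTF := by
  have : (0:ℝ) < (6 * Real.pi ^ 2) ^ ((2:ℝ)/3) :=
    Real.rpow_pos_of_pos (by positivity) _
  unfold cTF; positivity

lemma kappa_pos : 0 < kappa := by
  have h1 : (0:ℝ) < (2:ℝ) ^ (-(2:ℝ)/3) := Real.rpow_pos_of_pos (by norm_num) _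
  have h2 := cTF_pos
  unfold kappa; positivity

lemma coeff_eq : (2:ℝ) ^ (-(2:ℝ)/3) * cTF = (3/5) * kappa := by
  unfold kappa; ring

lemma TFfun_nonneg (V ρ : E3 → ℝ) (hV0 : ∀ x, 0 ≤ V x) (hρ0 : ∀ x, 0 ≤ ρ x) :
    0 ≤ TFfun V ρ := by
  have h1 : 0 ≤ ∫ x, ρ x ^ ((5:ℝ)/3) :=
    integral_nonneg fun x => Real.rpow_nonneg (hρ0 x) _
  have h2 : 0 ≤ ∫ x, V x * ρ x := integral_nonneg fun x => mul_nonneg (hV0 x) (hρ0 x)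
  have h3 : (0:ℝ) < (2:ℝ) ^ (-(2:ℝ)/3) := Real.rpow_pos_of_pos (by norm_num) _
  have h4 := cTF_pos
  unfold TFfun
  positivity

lemma TFenergy_le (V ρ : E3 → ℝ) (hV0 : ∀ x, 0 ≤ V x) (hadm : IsTFAdmissible V ρ) :
    TFenergy V ≤ TFfun V ρ := by
  apply csInf_le
  · refine ⟨0, ?_⟩
    rintro e ⟨σ, hσ, rfl⟩
    exact TFfun_nonneg V σ hV0 hσ.2.1
  · exact ⟨ρ, hadm, rfl⟩

lemma integrable_rpow53 (f : E3 → ℝ) (hf : MemLp f (5/3) volume) (h0 : ∀ x, 0 ≤ f x) :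
    Integrable (fun x => f x ^ ((5:ℝ)/3)) volume := by
  have h := hf.integrable_norm_rpow (by norm_num)
    (by rw [ne_eq, ENNReal.div_eq_top]; norm_num)
  have he : ((5:ℝ≥0∞)/3).toReal = (5:ℝ)/3 := by
    rw [ENNReal.toReal_div]; norm_num
  rw [he] at h
  refine h.congr (Eventually.of_forall fun x => ?_)
  simp only [Real.norm_eq_abs, abs_of_nonneg (h0 x)]

set_option maxHeartbeats 1000000 in
lemma no_crossing (V ρ : E3 → ℝ) (hVm : Measurable V) (hV0 : ∀ x, 0 ≤ V x)
    (hmin : IsTFMinimizer V ρ) (a b : ℝ) (hab : a < b) (ε : ℝ) (hε : 0 < ε)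
    (A B : Set E3) (hAm : MeasurableSet A) (hBm : MeasurableSet B)
    (hAsub : ∀ x ∈ A, ε ≤ ρ x ∧ b ≤ kappa * ρ x ^ ((2:ℝ)/3) + V x)
    (hBsub : ∀ x ∈ B, kappa * ρ x ^ ((2:ℝ)/3) + V x ≤ a)
    (hA0 : 0 < volume A) (hAfin : volume A < ⊤)
    (hB0 : 0 < volume B) (hBfin : volume B < ⊤) : False := by
  obtain ⟨⟨hρm, hρ0, hρLp, hVρ, hmass⟩, hEmin⟩ := hmin
  have hκ := kappa_pos
  -- a is nonneg
  obtain ⟨x₀, hx₀⟩ := nonempty_of_measure_ne_zero hB0.ne'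
  have ha0 : 0 ≤ a :=
    le_trans (add_nonneg (mul_nonneg hκ.le (Real.rpow_nonneg (hρ0 x₀) _)) (hV0 x₀))
      (hBsub x₀ hx₀)
  -- A and B are disjoint
  have hdisj : ∀ x ∈ A, x ∉ B := by
    intro x hxA hxB
    have h1 := (hAsub x hxA).2
    have h2 := hBsub x hxB
    linarith
  -- measures
  set α := (volume A).toReal with hαdef
  set β := (volume B).toReal with hβdef
  have hα0 : 0 < α := ENNReal.toReal_pos hA0.ne' hAfin.ne
  have hβ0 : 0 < β := ENNReal.toReal_pos hB0.ne' hBfin.ne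
  -- choice of the mass transfer parameter h
  set C : ℝ := kappa * (α + α ^ ((5:ℝ)/3) / β ^ ((2:ℝ)/3)) with hCdef
  have hβ23 : (0:ℝ) < β ^ ((2:ℝ)/3) := Real.rpow_pos_of_pos hβ0 _
  have hα53 : (0:ℝ) < α ^ ((5:ℝ)/3) := Real.rpow_pos_of_pos hα0 _
  have hC0 : 0 < C := by
    apply mul_pos hκ
    positivity
  set δ : ℝ := α * (b - a) / C with hδdef
  have hδ0 : 0 < δ := by
    apply div_pos (mul_pos hα0 (by linarith)) hC0
  set h : ℝ := min ε ((δ/2) ^ ((3:ℝ)/2)) with hhdef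
  have hh0 : 0 < h := lt_min hε (Real.rpow_pos_of_pos (by linarith) _)
  have hhε : h ≤ ε := min_le_left _ _
  have hh23 : h ^ ((2:ℝ)/3) < δ := by
    have h1 : h ^ ((2:ℝ)/3) ≤ ((δ/2) ^ ((3:ℝ)/2)) ^ ((2:ℝ)/3) :=
      Real.rpow_le_rpow hh0.le (min_le_right _ _) (by norm_num)
    have h2 : ((δ/2) ^ ((3:ℝ)/2)) ^ ((2:ℝ)/3) = δ/2 := by
      rw [← Real.rpow_mul (by linarith : (0:ℝ) ≤ δ/2)]
      norm_num
    rw [h2] at h1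
    linarith
  set s : ℝ := h * α / β with hsdef
  have hs0 : 0 < s := by positivity
  -- the perturbed density
  set ρ' : E3 → ℝ :=
    fun x => ρ x - A.indicator (fun _ => h) x + B.indicator (fun _ => s) x with hρ'def
  -- basic integrability facts
  have hχAint : Integrable (A.indicator fun _ => h) volume := by
    rw [integrable_indicator_iff hAm]
    exact integrableOn_const hAfin.ne
  have hχBint : Integrable (B.indicator fun _ => s) volume := by
    rw [integrable_indicator_iff hBm]
    exact integrableOn_const hBfin.ne
  have hχALp : MemLp (A.indicator fun _ => h) (5/3) volume :=
    memLp_indicator_const (5/3) hAm h (Or.inr hAfin.ne)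
  have hχBLp : MemLp (B.indicator fun _ => s) (5/3) volume :=
    memLp_indicator_const (5/3) hBm s (Or.inr hBfin.ne)
  have hρint : Integrable ρ volume := by
    by_contra hc
    rw [integral_undef hc] at hmass
    norm_num at hmass
  -- admissibility of ρ'
  have hρ'm : Measurable ρ' :=
    (hρm.sub (measurable_const.indicator hAm)).add (measurable_const.indicator hBm)
  have hρ'0 : ∀ x, 0 ≤ ρ' x := by
    intro x
    by_cases hxA : x ∈ A
    · have hxB : x ∉ B := hdisj x hxA
      simp only [hρ'def, Set.indicator_of_mem hxA, Set.indicator_of_notMem hxB]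
      have := (hAsub x hxA).1
      linarith
    · simp only [hρ'def, Set.indicator_of_notMem hxA]
      have : (0:ℝ) ≤ B.indicator (fun _ => s) x := Set.indicator_nonneg (fun _ _ => hs0.le) x
      have := hρ0 x
      linarith
  have hρ'Lp : MemLp ρ' (5/3) volume := (hρLp.sub hχALp).add hχBLp
  -- integrability of V * ρ'
  have hVA : Integrable (fun x => V x * A.indicator (fun _ => h) x) volume := by
    refine Integrable.mono' (hVρ.const_mul (h/ε)) ?_ ?_
    · exact (hVm.mul (measurable_const.indicator hAm)).aestronglyMeasurable
    · refine Eventually.of_forall fun x => ?_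
      by_cases hxA : x ∈ A
      · simp only [Set.indicator_of_mem hxA]
        rw [Real.norm_eq_abs, abs_of_nonneg (mul_nonneg (hV0 x) hh0.le)]
        have hρε := (hAsub x hxA).1
        calc V x * h = h/ε * (V x * ε) := by field_simp
          _ ≤ h/ε * (V x * ρ x) := by
              apply mul_le_mul_of_nonneg_left _ (by positivity)
              exact mul_le_mul_of_nonneg_left hρε (hV0 x)
      · simp only [Set.indicator_of_notMem hxA, mul_zero, norm_zero]
        exact mul_nonneg (by positivity) (mul_nonneg (hV0 x) (hρ0 x))
  have hVB : Integrable (fun x => V x * B.indicator (fun _ => s) x) volume := by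
    refine Integrable.mono' (g := B.indicator fun _ => a * s) ?_ ?_ ?_
    · rw [integrable_indicator_iff hBm]
      exact integrableOn_const hBfin.ne
    · exact (hVm.mul (measurable_const.indicator hBm)).aestronglyMeasurable
    · refine Eventually.of_forall fun x => ?_
      by_cases hxB : x ∈ B
      · simp only [Set.indicator_of_mem hxB]
        rw [Real.norm_eq_abs, abs_of_nonneg (mul_nonneg (hV0 x) hs0.le)]
        have hVa : V x ≤ a := by
          have := hBsub x hxB
          have : kappa * ρ x ^ ((2:ℝ)/3) ≥ 0 :=
            mul_nonneg hκ.le (Real.rpow_nonneg (hρ0 x) _)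
          linarith [hBsub x hxB]
        exact mul_le_mul_of_nonneg_right hVa hs0.le
      · simp only [Set.indicator_of_notMem hxB, mul_zero, norm_zero]
        exact le_refl 0
  have hVρ' : Integrable (fun x => V x * ρ' x) volume := by
    have heq : (fun x => V x * ρ' x) =
        fun x => (V x * ρ x - V x * A.indicator (fun _ => h) x)
          + V x * B.indicator (fun _ => s) x := by
      funext x; simp only [hρ'def]; ring
    rw [heq]
    exact (hVρ.sub hVA).add hVB
  -- the mass of ρ' is 1
  have hmass' : (∫ x, ρ' x) = 1 := by
    have h1 : (∫ x, ρ' x) = (∫ x, ρ x - A.indicator (fun _ => h) x)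
        + ∫ x, B.indicator (fun _ => s) x :=
      integral_add (hρint.sub hχAint) hχBint
    have h2 : (∫ x, ρ x - A.indicator (fun _ => h) x)
        = (∫ x, ρ x) - ∫ x, A.indicator (fun _ => h) x := integral_sub hρint hχAint
    have h3 : (∫ x, A.indicator (fun _ => h) x) = α * h := by
      rw [integral_indicator_const _ hAm]; simp [smul_eq_mul, hαdef, Measure.real]
    have h4 : (∫ x, B.indicator (fun _ => s) x) = β * s := by
      rw [integral_indicator_const _ hBm]; simp [smul_eq_mul, hβdef, Measure.real]
    have h5 : β * s = h * α := by
      rw [hsdef]; field_simp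
    rw [h1, h2, h3, h4, hmass, h5]; ring
  have hadm' : IsTFAdmissible V ρ' := ⟨hρ'm, hρ'0, hρ'Lp, hVρ', hmass'⟩
  -- integrability of the rpow terms
  have hρ5int : Integrable (fun x => ρ x ^ ((5:ℝ)/3)) volume := integrable_rpow53 ρ hρLp hρ0
  have hρ'5int : Integrable (fun x => ρ' x ^ ((5:ℝ)/3)) volume :=
    integrable_rpow53 ρ' hρ'Lp hρ'0
  -- the difference of energies as one integral
  set D : E3 → ℝ := fun x =>
    (3/5) * kappa * (ρ' x ^ ((5:ℝ)/3) - ρ x ^ ((5:ℝ)/3)) + (V x * ρ' x - V x * ρ x)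
    with hDdef
  have hDint : Integrable D volume :=
    (((hρ'5int.sub hρ5int).const_mul _)).add (hVρ'.sub hVρ)
  have hdiff : TFfun V ρ' - TFfun V ρ = ∫ x, D x := by
    have hsplit : (∫ x, D x) =
        (3/5) * kappa * ((∫ x, ρ' x ^ ((5:ℝ)/3)) - ∫ x, ρ x ^ ((5:ℝ)/3))
          + ((∫ x, V x * ρ' x) - ∫ x, V x * ρ x) := by
      have i1 : Integrable (fun x => (3/5) * kappa * (ρ' x ^ ((5:ℝ)/3) - ρ x ^ ((5:ℝ)/3)))
          volume := (hρ'5int.sub hρ5int).const_mul _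
      have i2 : Integrable (fun x => V x * ρ' x - V x * ρ x) volume := hVρ'.sub hVρ
      rw [hDdef, integral_add i1 i2, integral_const_mul, integral_sub hρ'5int hρ5int,
        integral_sub hVρ' hVρ]
    rw [hsplit]
    unfold TFfun
    rw [coeff_eq]
    ring
  -- the pointwise bound G
  set G : E3 → ℝ := fun x =>
    A.indicator (fun _ => -(b*h) + kappa * h ^ ((5:ℝ)/3)) x
      + B.indicator (fun _ => a*s + kappa * s ^ ((5:ℝ)/3)) x with hGdef
  have hGint : Integrable G volume := by
    apply Integrable.add
    · rw [integrable_indicator_iff hAm]; exact integrableOn_const hAfin.ne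
    · rw [integrable_indicator_iff hBm]; exact integrableOn_const hBfin.ne
  have h53h : h ^ ((5:ℝ)/3) = h ^ ((2:ℝ)/3) * h := by
    nth_rewrite 3 [← Real.rpow_one h]
    rw [← Real.rpow_add hh0]; norm_num
  have h53s : s ^ ((5:ℝ)/3) = s ^ ((2:ℝ)/3) * s := by
    nth_rewrite 3 [← Real.rpow_one s]
    rw [← Real.rpow_add hs0]; norm_num
  have hDG : ∀ x, D x ≤ G x := by
    intro x
    by_cases hxA : x ∈ A
    · have hxB : x ∉ B := hdisj x hxA
      obtain ⟨hρε, hbf⟩ := hAsub x hxA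
      have hρ'x : ρ' x = ρ x - h := by
        simp [hρ'def, Set.indicator_of_mem hxA, Set.indicator_of_notMem hxB]
      have hGx : G x = -(b*h) + kappa * h ^ ((5:ℝ)/3) := by
        simp [hGdef, Set.indicator_of_mem hxA, Set.indicator_of_notMem hxB]
      have hr0 : 0 ≤ ρ x - h := by linarith
      have e1 := (mvt53 (ρ x - h) (ρ x) hr0 (by linarith)).1
      rw [show ρ x - (ρ x - h) = h by ring] at e1
      have e2 : ρ x ^ ((2:ℝ)/3) - h ^ ((2:ℝ)/3) ≤ (ρ x - h) ^ ((2:ℝ)/3) := by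
        have := rpow23_subadd (ρ x - h) h hr0 hh0.le
        rw [sub_add_cancel] at this
        linarith
      have hGe : D x = (3/5) * kappa * ((ρ x - h) ^ ((5:ℝ)/3) - ρ x ^ ((5:ℝ)/3))
          + V x * (-h) := by
        rw [hDdef]; simp only [hρ'x]; ring
      have st1 : (3/5) * kappa * ((ρ x - h) ^ ((5:ℝ)/3) - ρ x ^ ((5:ℝ)/3))
          ≤ (3/5) * kappa * (-(5/3 * (ρ x - h) ^ ((2:ℝ)/3) * h)) := by
        apply mul_le_mul_of_nonneg_left (by linarith) (by positivity)
      have st1' : (3/5) * kappa * (-(5/3 * (ρ x - h) ^ ((2:ℝ)/3) * h))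
          = -(kappa * (ρ x - h) ^ ((2:ℝ)/3) * h) := by ring
      have st2 : kappa * (ρ x ^ ((2:ℝ)/3) - h ^ ((2:ℝ)/3)) * h
          ≤ kappa * (ρ x - h) ^ ((2:ℝ)/3) * h :=
        mul_le_mul_of_nonneg_right (mul_le_mul_of_nonneg_left e2 hκ.le) hh0.le
      have st3 : b * h ≤ (kappa * ρ x ^ ((2:ℝ)/3) + V x) * h :=
        mul_le_mul_of_nonneg_right hbf hh0.le
      have : D x ≤ -(kappa * (ρ x ^ ((2:ℝ)/3) - h ^ ((2:ℝ)/3)) * h) + V x * (-h) := by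
        rw [hGe]; linarith [st1, st2]
      rw [hGx, h53h]
      linarith [st3, this]
    · by_cases hxB : x ∈ B
      · have hfa := hBsub x hxB
        have hρ'x : ρ' x = ρ x + s := by
          simp [hρ'def, Set.indicator_of_notMem hxA, Set.indicator_of_mem hxB]
        have hGx : G x = a*s + kappa * s ^ ((5:ℝ)/3) := by
          simp [hGdef, Set.indicator_of_notMem hxA, Set.indicator_of_mem hxB]
        have e1 := (mvt53 (ρ x) (ρ x + s) (hρ0 x) (by linarith)).2
        rw [show ρ x + s - ρ x = s by ring] at e1
        have e2 : (ρ x + s) ^ ((2:ℝ)/3) ≤ ρ x ^ ((2:ℝ)/3) + s ^ ((2:ℝ)/3) :=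
          rpow23_subadd (ρ x) s (hρ0 x) hs0.le
        have hGe : D x = (3/5) * kappa * ((ρ x + s) ^ ((5:ℝ)/3) - ρ x ^ ((5:ℝ)/3))
            + V x * s := by
          rw [hDdef]; simp only [hρ'x]; ring
        have st1 : (3/5) * kappa * ((ρ x + s) ^ ((5:ℝ)/3) - ρ x ^ ((5:ℝ)/3))
            ≤ (3/5) * kappa * (5/3 * (ρ x + s) ^ ((2:ℝ)/3) * s) := by
          apply mul_le_mul_of_nonneg_left e1 (by positivity)
        have st2 : kappa * (ρ x + s) ^ ((2:ℝ)/3) * s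
            ≤ kappa * (ρ x ^ ((2:ℝ)/3) + s ^ ((2:ℝ)/3)) * s :=
          mul_le_mul_of_nonneg_right (mul_le_mul_of_nonneg_left e2 hκ.le) hs0.le
        have st3 : (kappa * ρ x ^ ((2:ℝ)/3) + V x) * s ≤ a * s :=
          mul_le_mul_of_nonneg_right hfa hs0.le
        rw [hGx, h53s, hGe]
        linarith [st1, st2, st3]
      · have hρ'x : ρ' x = ρ x := by
          simp [hρ'def, Set.indicator_of_notMem hxA, Set.indicator_of_notMem hxB]
        have hGx : G x = 0 := by
          simp [hGdef, Set.indicator_of_notMem hxA, Set.indicator_of_notMem hxB]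
        rw [hGx, hDdef]
        simp [hρ'x]
  -- the integral of G is negative
  have hGval : (∫ x, G x) = α * (-(b*h) + kappa * h ^ ((5:ℝ)/3))
      + β * (a*s + kappa * s ^ ((5:ℝ)/3)) := by
    rw [hGdef, integral_add, integral_indicator_const _ hAm, integral_indicator_const _ hBm]
    · simp [smul_eq_mul, hαdef, hβdef, Measure.real]
    · rw [integrable_indicator_iff hAm]; exact integrableOn_const hAfin.ne
    · rw [integrable_indicator_iff hBm]; exact integrableOn_const hBfin.ne
  have hGneg : (∫ x, G x) < 0 := by
    rw [hGval]
    have hβs : β * s = h * α := by rw [hsdef]; field_simp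
    have hs53 : s ^ ((5:ℝ)/3) = h ^ ((5:ℝ)/3) * α ^ ((5:ℝ)/3) / β ^ ((5:ℝ)/3) := by
      rw [hsdef, Real.div_rpow (by positivity) hβ0.le, Real.mul_rpow hh0.le hα0.le]
    have hβ53 : β ^ ((5:ℝ)/3) = β ^ ((2:ℝ)/3) * β := by
      nth_rewrite 3 [← Real.rpow_one β]
      rw [← Real.rpow_add hβ0]; norm_num
    have hβs53 : β * s ^ ((5:ℝ)/3) = h ^ ((5:ℝ)/3) * α ^ ((5:ℝ)/3) / β ^ ((2:ℝ)/3) := by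
      rw [hs53, hβ53]
      field_simp
    have hexp : α * (-(b*h) + kappa * h ^ ((5:ℝ)/3)) + β * (a*s + kappa * s ^ ((5:ℝ)/3))
        = h * (α * (a - b) + h ^ ((2:ℝ)/3) * C) := by
      rw [mul_add, mul_add, ← mul_assoc β a s, mul_comm β a, mul_assoc a β s, hβs,
        ← mul_assoc β kappa _, mul_comm β kappa, mul_assoc kappa β _, hβs53, hCdef, h53h]
      field_simp
      ring
    rw [hexp]
    apply mul_neg_of_pos_of_neg hh0
    have : h ^ ((2:ℝ)/3) * C < δ * C := by
      exact mul_lt_mul_of_pos_right hh23 hC0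
    rw [hδdef] at this
    rw [div_mul_cancel₀] at this
    · linarith
    · exact hC0.ne'
  -- contradiction with minimality
  have hle : TFfun V ρ' - TFfun V ρ ≤ ∫ x, G x := by
    rw [hdiff]
    exact integral_mono hDint hGint hDG
  have hge := TFenergy_le V ρ' hV0 hadm'
  rw [← hEmin] at hge
  linarith

end TFaux

set_option maxHeartbeats 1000000 in
/-- **Lagrange multiplier equation**: there is `λ_TF ∈ ℝ` with
`2^{-2/3}·(5/3)·c_TF·(ρ^TF)^{2/3} + V = λ_TF` a.e. on `{ρ^TF > 0}`
and `V ≥ λ_TF` a.e. on `{ρ^TF = 0}`. -/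
theorem TF_lagrange_multiplier
    (V : E3 → ℝ) (hVm : Measurable V) (hVloc : LocBounded V)
    (hV0 : ∀ x, 0 ≤ V x) (hVinf : Tendsto V (cocompact E3) atTop)
    (ρTF : E3 → ℝ) (hρTF : IsTFMinimizer V ρTF) :
    ∃ lamTF : ℝ,
      (∀ᵐ x ∂volume, 0 < ρTF x →
        (2:ℝ) ^ (-(2:ℝ)/3) * (5/3) * cTF * ρTF x ^ ((2:ℝ)/3) + V x = lamTF) ∧
      (∀ᵐ x ∂volume, ρTF x = 0 → lamTF ≤ V x) := by
  have hρm : Measurable ρTF := hρTF.1.1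
  have hρ0 : ∀ x, 0 ≤ ρTF x := hρTF.1.2.1
  have hκ := TFaux.kappa_pos
  set f : E3 → ℝ := fun x => TFaux.kappa * ρTF x ^ ((2:ℝ)/3) + V x with hfdef
  have hfm : Measurable f :=
    (measurable_const.mul
      ((Real.continuous_rpow_const (by norm_num)).measurable.comp hρm)).add hVm
  have hf0 : ∀ x, 0 ≤ f x := fun x =>
    add_nonneg (mul_nonneg hκ.le (Real.rpow_nonneg (hρ0 x) _)) (hV0 x)
  set T : Set ℝ := {t | 0 < volume {x | f x ≤ t}} with hTdef
  have hTmem : ∀ t : ℝ, t ∈ T ↔ 0 < volume {x | f x ≤ t} := fun t => Iff.rfl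
  -- T is nonempty
  have hTne : T.Nonempty := by
    by_contra hc
    rw [Set.not_nonempty_iff_eq_empty] at hc
    have hnull : ∀ n : ℕ, volume {x | f x ≤ (n:ℝ)} = 0 := by
      intro n
      by_contra hn
      have hmem : ((n:ℝ)) ∈ T := (hTmem _).mpr (zero_lt_iff.mpr hn)
      rw [hc] at hmem
      exact hmem
    have hcover : (Set.univ : Set E3) ⊆ ⋃ n : ℕ, {x | f x ≤ (n:ℝ)} := by
      intro x _
      obtain ⟨n, hn⟩ := exists_nat_ge (f x)
      exact Set.mem_iUnion.mpr ⟨n, hn⟩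
    have huniv : volume (Set.univ : Set E3) = 0 :=
      measure_mono_null hcover (measure_iUnion_null hnull)
    have hball : (0:ℝ≥0∞) < volume (Metric.ball (0:E3) 1) :=
      Metric.measure_ball_pos volume _ one_pos
    have : volume (Metric.ball (0:E3) 1) = 0 :=
      measure_mono_null (Set.subset_univ _) huniv
    rw [this] at hball
    exact lt_irrefl _ hball
  -- T is bounded below by 0
  have hTbdd : BddBelow T := by
    refine ⟨0, fun t ht => ?_⟩
    by_contra hlt
    push_neg at hlt
    have hempty : {x | f x ≤ t} = ∅ := by
      ext x
      simp only [Set.mem_setOf_eq, Set.mem_empty_iff_false, iff_false, not_le]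
      exact lt_of_lt_of_le hlt (hf0 x)
    rw [hTmem, hempty] at ht
    simp at ht
  set lam := sInf T with hlamdef
  -- a.e. lower bound : f ≥ lam a.e.
  have hnull_lt : volume {x | f x < lam} = 0 := by
    have hsub : {x | f x < lam} ⊆ ⋃ q : ℚ, {x | f x ≤ (q:ℝ) ∧ (q:ℝ) < lam} := by
      intro x hx
      obtain ⟨q, hq1, hq2⟩ := exists_rat_btwn (K := ℝ) hx
      exact Set.mem_iUnion.mpr ⟨q, hq1.le, hq2⟩
    refine measure_mono_null hsub (measure_iUnion_null fun q => ?_)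
    by_cases hq : (q:ℝ) < lam
    · have hqT : (q:ℝ) ∉ T := fun hqT => absurd (csInf_le hTbdd hqT) (not_le.mpr hq)
      have hq0 : volume {x | f x ≤ (q:ℝ)} = 0 := by
        by_contra hn
        exact hqT ((hTmem _).mpr (zero_lt_iff.mpr hn))
      exact measure_mono_null (fun x hx => hx.1) hq0
    · have hempty : {x | f x ≤ (q:ℝ) ∧ (q:ℝ) < lam} = ∅ := by
        ext x
        simp only [Set.mem_setOf_eq, Set.mem_empty_iff_false, iff_false]
        exact fun hx => hq hx.2
      simp [hempty]
  -- a.e. on the positivity set : f ≤ lam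
  have hnull_up : volume {x | 0 < ρTF x ∧ lam < f x} = 0 := by
    by_contra hpos
    have hsub : {x | 0 < ρTF x ∧ lam < f x} ⊆
        ⋃ q : ℚ, {x | (0 < ρTF x ∧ (q:ℝ) ≤ f x) ∧ lam < (q:ℝ)} := by
      intro x hx
      obtain ⟨q, h1, h2⟩ := exists_rat_btwn (K := ℝ) hx.2
      exact Set.mem_iUnion.mpr ⟨q, ⟨hx.1, h2.le⟩, h1⟩
    have hexq : ∃ q : ℚ, volume {x | (0 < ρTF x ∧ (q:ℝ) ≤ f x) ∧ lam < (q:ℝ)} ≠ 0 := by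
      by_contra hall
      push_neg at hall
      exact hpos (measure_mono_null hsub (measure_iUnion_null hall))
    obtain ⟨q, hq⟩ := hexq
    have hlamq : lam < (q:ℝ) := by
      by_contra hc
      apply hq
      have hempty : {x | (0 < ρTF x ∧ (q:ℝ) ≤ f x) ∧ lam < (q:ℝ)} = ∅ := by
        ext x
        simp only [Set.mem_setOf_eq, Set.mem_empty_iff_false, iff_false]
        exact fun hx => hc hx.2
      simp [hempty]
    set b : ℝ := (q:ℝ) with hbdef
    set a : ℝ := (lam + b)/2 with hadef
    have hab : a < b := by rw [hadef]; linarith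
    have hlama : lam < a := by rw [hadef]; linarith
    -- B has positive measure
    have hB0 : 0 < volume {x | f x ≤ a} := by
      obtain ⟨t, htT, hta⟩ := exists_lt_of_csInf_lt hTne (hlamdef ▸ hlama)
      exact lt_of_lt_of_le ((hTmem _).mp htT)
        (measure_mono fun x hx => le_trans hx hta.le)
    -- A has positive measure
    have hApos : 0 < volume {x | 0 < ρTF x ∧ b ≤ f x} := by
      refine lt_of_lt_of_le (zero_lt_iff.mpr hq) (measure_mono ?_)
      intro x hx
      exact ⟨hx.1.1, hx.1.2⟩
    -- extract a piece of A with ρ bounded below, inside a ball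
    have hcoverA : {x | 0 < ρTF x ∧ b ≤ f x} ⊆
        ⋃ n : ℕ, ({x | 1/((n:ℝ)+1) ≤ ρTF x ∧ b ≤ f x} ∩ Metric.closedBall 0 n) := by
      intro x hx
      obtain ⟨n1, hn1⟩ := exists_nat_gt (1 / ρTF x)
      obtain ⟨n2, hn2⟩ := exists_nat_ge ‖x‖
      refine Set.mem_iUnion.mpr ⟨max n1 n2, ⟨⟨?_, hx.2⟩, ?_⟩⟩
      · have hρx := hx.1
        have hmax1 : (n1:ℝ) ≤ ((max n1 n2 : ℕ):ℝ) := by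
          exact_mod_cast Nat.le_max_left n1 n2
        have hle1 : 1 / ρTF x ≤ ((max n1 n2 : ℕ):ℝ) + 1 := by linarith
        have h1 : 1 ≤ (((max n1 n2 : ℕ):ℝ) + 1) * ρTF x := by
          rw [div_le_iff₀ hρx] at hle1
          linarith [hle1]
        rw [div_le_iff₀ (by positivity : (0:ℝ) < ((max n1 n2 : ℕ):ℝ) + 1)]
        linarith [mul_comm (((max n1 n2 : ℕ):ℝ) + 1) (ρTF x)]
      · rw [mem_closedBall_zero_iff]
        have hmax2 : (n2:ℝ) ≤ ((max n1 n2 : ℕ):ℝ) := by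
          exact_mod_cast Nat.le_max_right n1 n2
        linarith
    have hexA : ∃ n : ℕ,
        volume ({x | 1/((n:ℝ)+1) ≤ ρTF x ∧ b ≤ f x} ∩ Metric.closedBall 0 n) ≠ 0 := by
      by_contra hall
      push_neg at hall
      exact hApos.ne' (measure_mono_null hcoverA (measure_iUnion_null hall))
    obtain ⟨n, hn⟩ := hexA
    -- extract a piece of B inside a ball
    have hcoverB : {x | f x ≤ a} ⊆ ⋃ m : ℕ, ({x | f x ≤ a} ∩ Metric.closedBall 0 m) := by
      intro x hx
      obtain ⟨m, hm⟩ := exists_nat_ge ‖x‖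
      exact Set.mem_iUnion.mpr ⟨m, hx, mem_closedBall_zero_iff.mpr hm⟩
    have hexB : ∃ m : ℕ, volume ({x | f x ≤ a} ∩ Metric.closedBall 0 m) ≠ 0 := by
      by_contra hall
      push_neg at hall
      exact hB0.ne' (measure_mono_null hcoverB (measure_iUnion_null hall))
    obtain ⟨m, hm⟩ := hexB
    -- measurability of the pieces
    have hmA : MeasurableSet ({x | 1/((n:ℝ)+1) ≤ ρTF x ∧ b ≤ f x} ∩ Metric.closedBall 0 n) := by
      refine MeasurableSet.inter ?_ measurableSet_closedBall
      have h1 : MeasurableSet {x | 1/((n:ℝ)+1) ≤ ρTF x} := hρm measurableSet_Ici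
      have h2 : MeasurableSet {x | b ≤ f x} := hfm measurableSet_Ici
      exact h1.inter h2
    have hmB : MeasurableSet ({x | f x ≤ a} ∩ Metric.closedBall 0 m) :=
      (hfm measurableSet_Iic).inter measurableSet_closedBall
    -- apply no_crossing
    refine TFaux.no_crossing V ρTF hVm hV0 hρTF a b hab (1/((n:ℝ)+1)) (by positivity)
      _ _ hmA hmB ?_ ?_ (zero_lt_iff.mpr hn) ?_ (zero_lt_iff.mpr hm) ?_
    · exact fun x hx => ⟨hx.1.1, hx.1.2⟩
    · exact fun x hx => hx.1
    · exact lt_of_le_of_lt (measure_mono Set.inter_subset_right) measure_closedBall_lt_top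
    · exact lt_of_le_of_lt (measure_mono Set.inter_subset_right) measure_closedBall_lt_top
  -- conclusion
  have hae1 : ∀ᵐ x ∂volume, ¬(f x < lam) := by
    rw [ae_iff]
    simpa using hnull_lt
  have hae2 : ∀ᵐ x ∂volume, ¬(0 < ρTF x ∧ lam < f x) := by
    rw [ae_iff]
    simpa using hnull_up
  refine ⟨lam, ?_, ?_⟩
  · filter_upwards [hae1, hae2] with x hx1 hx2 hρx
    have hge : lam ≤ f x := not_lt.mp hx1
    have hle : f x ≤ lam := by
      by_contra hc
      exact hx2 ⟨hρx, lt_of_not_ge hc⟩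
    have hfx : f x = lam := le_antisymm hle hge
    rw [hfdef] at hfx
    rw [TFaux.kappa_def] at hfx
    linarith [hfx]
  · filter_upwards [hae1] with x hx1 hρx0
    have hge : lam ≤ f x := not_lt.mp hx1
    rw [hfdef] at hge
    simp only [hρx0, Real.zero_rpow (by norm_num : ((2:ℝ)/3) ≠ 0), mul_zero, zero_add] at hge
    exact hge
end
end

section
/- (Strong convergence of two-spin TF-minimizing sequences.) Let (ρ_n, σ_n) be a sequence of pairs of measurable functions ρ_n, σ_n : ℝ³ → [0,∞) with ∫_{ℝ³}(ρ_n + σ_n) = 1 such that 𝓔^TF_{(2)}[ρ_n, σ_n] → E^TF as n → ∞. Then ρ_n → ρ^TF/2 and σ_n → ρ^TF/2 strongly in L^{5/3}(ℝ³). -/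
open MeasureTheory Filter Topology
open scoped ENNReal NNReal

noncomputable section

/-- The two-spin Thomas–Fermi functional
`𝓔^TF_{(2)}[ρ↑,ρ↓] = c_TF ∫ (ρ↑^{5/3} + ρ↓^{5/3}) + ∫ V (ρ↑ + ρ↓)`. -/
def TF2fun (V ρ σ : E3 → ℝ) : ℝ :=
  cTF * (∫ x, (ρ x ^ ((5:ℝ)/3) + σ x ^ ((5:ℝ)/3))) + ∫ x, V x * (ρ x + σ x)


lemma gconv : ConvexOn ℝ (Set.Icc (0:ℝ) 1) (fun x => x ^ ((5:ℝ)/3) - 5/9 * x^2) := by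
  have hG : ∀ x : ℝ, x ≠ 0 →
      HasDerivAt (fun y : ℝ => y ^ ((5:ℝ)/3) - 5/9 * y^2) (5/3 * x ^ ((2:ℝ)/3) - 10/9 * x) x := by
    intro x hx
    have h1 := Real.hasDerivAt_rpow_const (p := (5:ℝ)/3) (x := x) (Or.inl hx)
    have h2 : HasDerivAt (fun y : ℝ => 5/9 * y^2) (10/9 * x) x := by
      have := (hasDerivAt_pow 2 x).const_mul (5/9 : ℝ)
      exact this.congr_deriv (by ring)
    have := h1.fun_sub h2
    refine this.congr_deriv ?_
    norm_num
  have hderiv : ∀ x ∈ Set.Ioo (0:ℝ) 1,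
      deriv (fun y : ℝ => y ^ ((5:ℝ)/3) - 5/9 * y^2) x = 5/3 * x ^ ((2:ℝ)/3) - 10/9 * x :=
    fun x hx => (hG x hx.1.ne').deriv
  have hG2 : ∀ x : ℝ, x ≠ 0 →
      HasDerivAt (fun y : ℝ => 5/3 * y ^ ((2:ℝ)/3) - 10/9 * y) (10/9 * x ^ (-(1:ℝ)/3) - 10/9) x := by
    intro x hx
    have h1 := (Real.hasDerivAt_rpow_const (p := (2:ℝ)/3) (x := x) (Or.inl hx)).const_mul (5/3 : ℝ)
    have h2 : HasDerivAt (fun y : ℝ => 10/9 * y) (10/9 : ℝ) x := by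
      simpa using (hasDerivAt_id x).const_mul (10/9 : ℝ)
    have := h1.fun_sub h2
    refine this.congr_deriv ?_
    norm_num
    ring
  apply convexOn_of_deriv2_nonneg (convex_Icc 0 1)
  · exact ((continuous_id.rpow_const (fun _ => Or.inr (by norm_num))).sub
      (continuous_const.mul (continuous_pow 2))).continuousOn
  · rw [interior_Icc]
    exact fun x hx => ((hG x hx.1.ne').differentiableAt).differentiableWithinAt
  · rw [interior_Icc]
    intro x hx
    have hev : deriv (fun y : ℝ => y ^ ((5:ℝ)/3) - 5/9 * y^2)
        =ᶠ[𝓝 x] (fun y : ℝ => 5/3 * y ^ ((2:ℝ)/3) - 10/9 * y) := by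
      filter_upwards [Ioo_mem_nhds hx.1 hx.2] with y hy using hderiv y hy
    exact (hev.differentiableAt_iff.2 (hG2 x hx.1.ne').differentiableAt).differentiableWithinAt
  · rw [interior_Icc]
    intro x hx
    have hev : deriv (fun y : ℝ => y ^ ((5:ℝ)/3) - 5/9 * y^2)
        =ᶠ[𝓝 x] (fun y : ℝ => 5/3 * y ^ ((2:ℝ)/3) - 10/9 * y) := by
      filter_upwards [Ioo_mem_nhds hx.1 hx.2] with y hy using hderiv y hy
    have : deriv^[2] (fun y : ℝ => y ^ ((5:ℝ)/3) - 5/9 * y^2) x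
        = 10/9 * x ^ (-(1:ℝ)/3) - 10/9 := by
      show deriv (deriv _) x = _
      rw [hev.deriv_eq]
      exact (hG2 x hx.1.ne').deriv
    rw [this]
    have : (1:ℝ) ≤ x ^ (-(1:ℝ)/3) := by
      apply Real.one_le_rpow_of_pos_of_le_one_of_nonpos hx.1 hx.2.le
      norm_num
    linarith

lemma midpoint_ineq {a b : ℝ} (ha : a ∈ Set.Icc (0:ℝ) 1) (hb : b ∈ Set.Icc (0:ℝ) 1) :
    5/18 * (a-b)^2 ≤ a ^ ((5:ℝ)/3) + b ^ ((5:ℝ)/3) - 2 ^ (-(2:ℝ)/3) * (a+b) ^ ((5:ℝ)/3) := by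
  have key := gconv.2 ha hb (by norm_num : (0:ℝ) ≤ 1/2) (by norm_num : (0:ℝ) ≤ 1/2) (by norm_num)
  simp only [smul_eq_mul] at key
  have hmid : (1/2 : ℝ) * a + 1/2 * b = (a+b)/2 := by ring
  rw [hmid] at key
  have h2 : ((a+b)/2) ^ ((5:ℝ)/3) = (a+b) ^ ((5:ℝ)/3) / 2 ^ ((5:ℝ)/3) :=
    Real.div_rpow (by linarith [ha.1, hb.1]) (by norm_num) _
  have h3 : (2:ℝ) ^ (-(2:ℝ)/3) * 2 ^ ((5:ℝ)/3) = 2 := by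
    rw [← Real.rpow_add (by norm_num)]; norm_num
  have h4 : (2:ℝ) ^ (-(2:ℝ)/3) * (a+b) ^ ((5:ℝ)/3) = 2 * (((a+b)/2) ^ ((5:ℝ)/3)) := by
    have h5 : (0:ℝ) < 2 ^ ((5:ℝ)/3) := Real.rpow_pos_of_pos (by norm_num) _
    rw [h2, mul_div_assoc', eq_div_iff h5.ne', mul_right_comm, h3]
  rw [h4]
  nlinarith [key]

lemma defect_ge {a b : ℝ} (ha : 0 ≤ a) (hb : 0 ≤ b) :
    5/18 * (a-b)^2 * (a+b) ^ (-(1:ℝ)/3)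
      ≤ a ^ ((5:ℝ)/3) + b ^ ((5:ℝ)/3) - 2 ^ (-(2:ℝ)/3) * (a+b) ^ ((5:ℝ)/3) := by
  set s := a + b with hs
  rcases eq_or_lt_of_le (by linarith : (0:ℝ) ≤ s) with h0 | hpos
  · have ha0 : a = 0 := by linarith
    have hb0 : b = 0 := by linarith
    have hs0 : s = 0 := h0.symm
    simp [hs0, ha0, hb0, Real.zero_rpow (by norm_num : ((5:ℝ)/3) ≠ 0)]
  · have hsne : s ≠ 0 := hpos.ne'
    have hmem : a/s ∈ Set.Icc (0:ℝ) 1 :=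
      ⟨div_nonneg ha hpos.le, by rw [div_le_one hpos]; linarith⟩
    have hmem' : b/s ∈ Set.Icc (0:ℝ) 1 :=
      ⟨div_nonneg hb hpos.le, by rw [div_le_one hpos]; linarith⟩
    have key := midpoint_ineq hmem hmem'
    have e1 : (a/s) ^ ((5:ℝ)/3) = a ^ ((5:ℝ)/3) / s ^ ((5:ℝ)/3) := Real.div_rpow ha hpos.le _
    have e2 : (b/s) ^ ((5:ℝ)/3) = b ^ ((5:ℝ)/3) / s ^ ((5:ℝ)/3) := Real.div_rpow hb hpos.le _
    have e3 : a/s + b/s = 1 := by field_simp; exact hs.symm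
    have e4 : (a/s - b/s)^2 = (a-b)^2 / s^2 := by rw [div_sub_div_same, div_pow]
    rw [e1, e2, e3, e4, Real.one_rpow, mul_one] at key
    have h5 : (0:ℝ) < s ^ ((5:ℝ)/3) := Real.rpow_pos_of_pos hpos _
    have key2 := mul_le_mul_of_nonneg_right key h5.le
    have e5 : (a ^ ((5:ℝ)/3) / s ^ ((5:ℝ)/3) + b ^ ((5:ℝ)/3) / s ^ ((5:ℝ)/3) - 2 ^ (-(2:ℝ)/3))
        * s ^ ((5:ℝ)/3)
        = a ^ ((5:ℝ)/3) + b ^ ((5:ℝ)/3) - 2 ^ (-(2:ℝ)/3) * s ^ ((5:ℝ)/3) := by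
      field_simp
    have e6 : s ^ ((5:ℝ)/3) / s^2 = s ^ (-(1:ℝ)/3) := by
      rw [← Real.rpow_natCast s 2, ← Real.rpow_sub hpos]; norm_num
    have e7 : 5/18 * ((a-b)^2 / s^2) * s ^ ((5:ℝ)/3)
        = 5/18 * (a-b)^2 * (s ^ ((5:ℝ)/3) / s^2) := by ring
    rw [e5, e7, e6] at key2
    exact key2

lemma defect_nonneg {a b : ℝ} (ha : 0 ≤ a) (hb : 0 ≤ b) :
    0 ≤ a ^ ((5:ℝ)/3) + b ^ ((5:ℝ)/3) - 2 ^ (-(2:ℝ)/3) * (a+b) ^ ((5:ℝ)/3) := by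
  refine le_trans ?_ (defect_ge ha hb)
  positivity

lemma factor_eq {a b : ℝ} (ha : 0 ≤ a) (hb : 0 ≤ b) :
    |a - b| ^ ((5:ℝ)/3)
      = ((a-b)^2 * (a+b) ^ (-(1:ℝ)/3)) ^ ((5:ℝ)/6) * ((a+b) ^ ((5:ℝ)/3)) ^ ((1:ℝ)/6) := by
  set s := a + b with hs
  rcases eq_or_lt_of_le (by linarith : (0:ℝ) ≤ s) with h0 | hpos
  · have ha0 : a = 0 := by linarith
    have hb0 : b = 0 := by linarith
    have hs0 : s = 0 := h0.symm
    simp [hs0, ha0, hb0, Real.zero_rpow, (by norm_num : ((5:ℝ)/3) ≠ 0),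
      (by norm_num : ((5:ℝ)/6) ≠ 0), (by norm_num : ((1:ℝ)/6) ≠ 0)]
  · have e1 : ((a-b)^2 * s ^ (-(1:ℝ)/3)) ^ ((5:ℝ)/6)
        = ((a-b)^2) ^ ((5:ℝ)/6) * s ^ (-(1:ℝ)/3 * (5/6)) := by
      rw [Real.mul_rpow (by positivity) (Real.rpow_nonneg hpos.le _), ← Real.rpow_mul hpos.le]
    have e2 : ((a-b)^2) ^ ((5:ℝ)/6) = |a-b| ^ ((5:ℝ)/3) := by
      rw [← sq_abs, ← Real.rpow_natCast |a-b| 2, ← Real.rpow_mul (abs_nonneg _)]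
      norm_num
    have e3 : (s ^ ((5:ℝ)/3)) ^ ((1:ℝ)/6) = s ^ ((5:ℝ)/3 * (1/6)) := by
      rw [← Real.rpow_mul hpos.le]
    rw [e1, e2, e3, mul_assoc, ← Real.rpow_add hpos]
    norm_num

lemma hoelder56 {f g : E3 → ℝ≥0∞} (hf : AEMeasurable f volume) (hg : AEMeasurable g volume) :
    ∫⁻ x, (f x) ^ ((5:ℝ)/6) * (g x) ^ ((1:ℝ)/6)
      ≤ (∫⁻ x, f x) ^ ((5:ℝ)/6) * (∫⁻ x, g x) ^ ((1:ℝ)/6) := by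
  have hpq : Real.HolderConjugate (6/5) 6 := ⟨by norm_num, by norm_num, by norm_num⟩
  have := ENNReal.lintegral_mul_le_Lp_mul_Lq volume hpq
    (hf.pow_const ((5:ℝ)/6)) (hg.pow_const ((1:ℝ)/6))
  simp only [Pi.mul_apply] at this
  calc ∫⁻ x, (f x) ^ ((5:ℝ)/6) * (g x) ^ ((1:ℝ)/6)
      ≤ (∫⁻ x, ((f x) ^ ((5:ℝ)/6)) ^ ((6:ℝ)/5)) ^ (1/((6:ℝ)/5))
        * (∫⁻ x, ((g x) ^ ((1:ℝ)/6)) ^ (6:ℝ)) ^ (1/(6:ℝ)) := by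
        simpa using this
    _ = (∫⁻ x, f x) ^ ((5:ℝ)/6) * (∫⁻ x, g x) ^ ((1:ℝ)/6) := by
        simp_rw [← ENNReal.rpow_mul]
        norm_num


lemma cTF_pos : 0 < cTF := by
  unfold cTF
  positivity

lemma int_rpow {f : E3 → ℝ} (h0 : ∀ x, 0 ≤ f x) (hLp : MemLp f (5/3) volume) :
    Integrable (fun x => f x ^ ((5:ℝ)/3)) volume := by
  have h := hLp.integrable_norm_rpow (by norm_num) (ENNReal.div_lt_top (by norm_num) (by norm_num)).ne
  have ht : ((5:ℝ≥0∞)/3).toReal = (5:ℝ)/3 := by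
    rw [ENNReal.toReal_div]; norm_num
  rw [ht] at h
  refine h.congr (Eventually.of_forall fun x => ?_)
  simp [Real.norm_eq_abs, abs_of_nonneg (h0 x)]

lemma integrable_of_pot {V f : E3 → ℝ} (hVinf : Tendsto V (cocompact E3) atTop)
    (hV0 : ∀ x, 0 ≤ V x) (hfm : Measurable f) (hf0 : ∀ x, 0 ≤ f x)
    (hfLp : MemLp f (5/3) volume) (hVf : Integrable (fun x => V x * f x) volume) :
    Integrable f volume := by
  obtain ⟨K, hK, hKV⟩ := mem_cocompact.1 (hVinf (Ici_mem_atTop 1))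
  haveI : IsFiniteMeasure (volume.restrict K) := by
    constructor
    rw [Measure.restrict_apply_univ]
    exact hK.measure_lt_top
  have h2 : Integrable f (volume.restrict K) :=
    (hfLp.restrict K).integrable
      (by rw [ENNReal.le_div_iff_mul_le (by norm_num) (by norm_num)]; norm_num)
  have hind : Integrable (K.indicator f) volume :=
    IntegrableOn.integrable_indicator h2 hK.measurableSet
  refine Integrable.mono' (hind.add hVf) hfm.aestronglyMeasurable
    (Eventually.of_forall fun x => ?_)
  rw [Real.norm_eq_abs, abs_of_nonneg (hf0 x)]
  simp only [Pi.add_apply]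
  by_cases hx : x ∈ K
  · rw [Set.indicator_of_mem hx]
    have : 0 ≤ V x * f x := mul_nonneg (hV0 x) (hf0 x)
    linarith
  · rw [Set.indicator_of_notMem hx]
    have h1V : 1 ≤ V x := hKV hx
    have : f x ≤ V x * f x := le_mul_of_one_le_left (hf0 x) h1V
    linarith

lemma TFfun_nonneg {V f : E3 → ℝ} (hV0 : ∀ x, 0 ≤ V x) (hf0 : ∀ x, 0 ≤ f x) :
    0 ≤ TFfun V f := by
  have h1 : 0 ≤ ∫ x, f x ^ ((5:ℝ)/3) :=
    integral_nonneg fun x => Real.rpow_nonneg (hf0 x) _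
  have h2 : 0 ≤ ∫ x, V x * f x := integral_nonneg fun x => mul_nonneg (hV0 x) (hf0 x)
  have h3 : (0:ℝ) ≤ 2 ^ (-(2:ℝ)/3) * cTF :=
    mul_nonneg (Real.rpow_nonneg (by norm_num) _) cTF_pos.le
  unfold TFfun
  nlinarith

lemma TFenergy_le {V f : E3 → ℝ} (hV0 : ∀ x, 0 ≤ V x) (hf : IsTFAdmissible V f) :
    TFenergy V ≤ TFfun V f := by
  apply csInf_le
  · refine ⟨0, ?_⟩
    rintro e ⟨g, hg, rfl⟩
    exact TFfun_nonneg hV0 hg.2.1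
  · exact ⟨f, hf, rfl⟩

lemma key_bound {f g : E3 → ℝ} (hfm : Measurable f) (hgm : Measurable g)
    (hf0 : ∀ x, 0 ≤ f x) (hg0 : ∀ x, 0 ≤ g x)
    (hfLp : MemLp f (5/3) volume) (hgLp : MemLp g (5/3) volume) :
    (∫⁻ x, ENNReal.ofReal (|f x - g x| ^ ((5:ℝ)/3)))
      ≤ (ENNReal.ofReal ((18/5) * ∫ x, (f x ^ ((5:ℝ)/3) + g x ^ ((5:ℝ)/3)
            - 2 ^ (-(2:ℝ)/3) * (f x + g x) ^ ((5:ℝ)/3)))) ^ ((5:ℝ)/6)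
        * (ENNReal.ofReal (∫ x, (f x + g x) ^ ((5:ℝ)/3))) ^ ((1:ℝ)/6) := by
  set F : E3 → ℝ≥0∞ := fun x => ENNReal.ofReal ((f x - g x)^2 * (f x + g x) ^ (-(1:ℝ)/3))
    with hF
  set G : E3 → ℝ≥0∞ := fun x => ENNReal.ofReal ((f x + g x) ^ ((5:ℝ)/3)) with hG
  have hFm : Measurable F := by
    rw [hF]; fun_prop
  have hGm : Measurable G := by
    rw [hG]; fun_prop
  have hif : Integrable (fun x => f x ^ ((5:ℝ)/3)) volume := int_rpow hf0 hfLp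
  have hig : Integrable (fun x => g x ^ ((5:ℝ)/3)) volume := int_rpow hg0 hgLp
  have his : Integrable (fun x => (f x + g x) ^ ((5:ℝ)/3)) volume :=
    int_rpow (fun x => add_nonneg (hf0 x) (hg0 x)) (hfLp.add hgLp)
  have hid : Integrable (fun x => f x ^ ((5:ℝ)/3) + g x ^ ((5:ℝ)/3)
      - 2 ^ (-(2:ℝ)/3) * (f x + g x) ^ ((5:ℝ)/3)) volume :=
    (hif.add hig).sub (his.const_mul _)
  calc (∫⁻ x, ENNReal.ofReal (|f x - g x| ^ ((5:ℝ)/3)))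
      = ∫⁻ x, (F x) ^ ((5:ℝ)/6) * (G x) ^ ((1:ℝ)/6) := by
        refine lintegral_congr fun x => ?_
        rw [hF, hG]
        have hA : (0:ℝ) ≤ (f x - g x)^2 * (f x + g x) ^ (-(1:ℝ)/3) :=
          mul_nonneg (sq_nonneg _) (Real.rpow_nonneg (add_nonneg (hf0 x) (hg0 x)) _)
        have hB : (0:ℝ) ≤ (f x + g x) ^ ((5:ℝ)/3) :=
          Real.rpow_nonneg (add_nonneg (hf0 x) (hg0 x)) _
        rw [factor_eq (hf0 x) (hg0 x), ENNReal.ofReal_mul (Real.rpow_nonneg hA _),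
          ← ENNReal.ofReal_rpow_of_nonneg hA (by norm_num),
          ← ENNReal.ofReal_rpow_of_nonneg hB (by norm_num)]
    _ ≤ (∫⁻ x, F x) ^ ((5:ℝ)/6) * (∫⁻ x, G x) ^ ((1:ℝ)/6) :=
        hoelder56 hFm.aemeasurable hGm.aemeasurable
    _ ≤ (ENNReal.ofReal ((18/5) * ∫ x, (f x ^ ((5:ℝ)/3) + g x ^ ((5:ℝ)/3)
            - 2 ^ (-(2:ℝ)/3) * (f x + g x) ^ ((5:ℝ)/3)))) ^ ((5:ℝ)/6)
        * (ENNReal.ofReal (∫ x, (f x + g x) ^ ((5:ℝ)/3))) ^ ((1:ℝ)/6) := by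
        gcongr
        · calc ∫⁻ x, F x
              ≤ ∫⁻ x, ENNReal.ofReal ((18/5) * (f x ^ ((5:ℝ)/3) + g x ^ ((5:ℝ)/3)
                - 2 ^ (-(2:ℝ)/3) * (f x + g x) ^ ((5:ℝ)/3))) := by
                refine lintegral_mono fun x => ENNReal.ofReal_le_ofReal ?_
                have := defect_ge (hf0 x) (hg0 x)
                linarith
            _ = ENNReal.ofReal (∫ x, (18/5) * (f x ^ ((5:ℝ)/3) + g x ^ ((5:ℝ)/3)
                - 2 ^ (-(2:ℝ)/3) * (f x + g x) ^ ((5:ℝ)/3))) := by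
                rw [ofReal_integral_eq_lintegral_ofReal (hid.const_mul _)
                  (Eventually.of_forall fun x => by
                    have := defect_nonneg (hf0 x) (hg0 x)
                    simp only [Pi.zero_apply]
                    nlinarith)]
            _ ≤ ENNReal.ofReal ((18/5) * ∫ x, (f x ^ ((5:ℝ)/3) + g x ^ ((5:ℝ)/3)
                - 2 ^ (-(2:ℝ)/3) * (f x + g x) ^ ((5:ℝ)/3))) := by
                rw [integral_const_mul]
        · rw [hG, ← ofReal_integral_eq_lintegral_ofReal his
            (Eventually.of_forall fun x =>
              Real.rpow_nonneg (add_nonneg (hf0 x) (hg0 x)) _)]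


lemma p53_ne_zero : (5/3 : ℝ≥0∞) ≠ 0 := by
  simp [ENNReal.div_eq_zero_iff]

lemma p53_ne_top : (5/3 : ℝ≥0∞) ≠ ⊤ :=
  (ENNReal.div_lt_top (by norm_num) (by norm_num)).ne

lemma p53_toReal : (5/3 : ℝ≥0∞).toReal = 5/3 := by
  rw [ENNReal.toReal_div]; norm_num

lemma one_le_p53 : (1:ℝ≥0∞) ≤ 5/3 := by
  rw [ENNReal.le_div_iff_mul_le (by norm_num) (by norm_num)]; norm_num

lemma eLpNorm_53 (h : E3 → ℝ) :
    eLpNorm h (5/3) volume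
      = (∫⁻ x, ENNReal.ofReal (|h x| ^ ((5:ℝ)/3))) ^ ((3:ℝ)/5) := by
  have e : (∫⁻ x, ‖h x‖ₑ ^ ((5:ℝ)/3))
      = ∫⁻ x, ENNReal.ofReal (|h x| ^ ((5:ℝ)/3)) := by
    refine lintegral_congr fun x => ?_
    rw [Real.enorm_eq_ofReal_abs,
      ENNReal.ofReal_rpow_of_nonneg (abs_nonneg _) (by norm_num)]
  rw [eLpNorm_eq_lintegral_rpow_enorm_toReal p53_ne_zero p53_ne_top, p53_toReal, e]
  norm_num
  

lemma conv_lemma (f g : ℕ → E3 → ℝ)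
    (hfm : ∀ n, Measurable (f n)) (hgm : ∀ n, Measurable (g n))
    (hf0 : ∀ n x, 0 ≤ f n x) (hg0 : ∀ n x, 0 ≤ g n x)
    (hfLp : ∀ n, MemLp (f n) (5/3) volume) (hgLp : ∀ n, MemLp (g n) (5/3) volume)
    (M : ℝ)
    (hM : ∀ᶠ n in atTop, (∫ x, (f n x + g n x) ^ ((5:ℝ)/3)) ≤ M)
    (hΔ : Tendsto (fun n => ∫ x, (f n x ^ ((5:ℝ)/3) + g n x ^ ((5:ℝ)/3)
        - 2 ^ (-(2:ℝ)/3) * (f n x + g n x) ^ ((5:ℝ)/3))) atTop (𝓝 0)) :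
    Tendsto (fun n => eLpNorm (fun x => f n x - g n x) (5/3) volume) atTop (𝓝 0) := by
  set Δ : ℕ → ℝ := fun n => ∫ x, (f n x ^ ((5:ℝ)/3) + g n x ^ ((5:ℝ)/3)
      - 2 ^ (-(2:ℝ)/3) * (f n x + g n x) ^ ((5:ℝ)/3)) with hΔdef
  set B : ℕ → ℝ≥0∞ := fun n =>
    ((ENNReal.ofReal ((18/5) * Δ n)) ^ ((5:ℝ)/6)
      * (ENNReal.ofReal M) ^ ((1:ℝ)/6)) ^ ((3:ℝ)/5) with hBdef
  have hBle : ∀ᶠ n in atTop, eLpNorm (fun x => f n x - g n x) (5/3) volume ≤ B n := by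
    filter_upwards [hM] with n hMn
    rw [eLpNorm_53]
    refine ENNReal.rpow_le_rpow ?_ (by norm_num)
    refine le_trans (key_bound (hfm n) (hgm n) (hf0 n) (hg0 n) (hfLp n) (hgLp n)) ?_
    gcongr
  have hB0 : Tendsto B atTop (𝓝 0) := by
    have h1 : Tendsto (fun n => ENNReal.ofReal ((18/5) * Δ n)) atTop (𝓝 0) := by
      have h0 : Tendsto (fun n => (18/5) * Δ n) atTop (𝓝 0) := by
        simpa using hΔ.const_mul (18/5 : ℝ)
      simpa using ENNReal.tendsto_ofReal h0
    have h2 : Tendsto (fun n => (ENNReal.ofReal ((18/5) * Δ n)) ^ ((5:ℝ)/6))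
        atTop (𝓝 0) := by
      have := (ENNReal.continuous_rpow_const (y := (5:ℝ)/6)).continuousAt
        (x := (0:ℝ≥0∞)) |>.tendsto.comp h1
      simpa [Function.comp_def, ENNReal.zero_rpow_of_pos (by norm_num : (0:ℝ) < 5/6)] using this
    have h3 : Tendsto (fun n => (ENNReal.ofReal ((18/5) * Δ n)) ^ ((5:ℝ)/6)
        * (ENNReal.ofReal M) ^ ((1:ℝ)/6)) atTop (𝓝 0) := by
      have hc : (ENNReal.ofReal M) ^ ((1:ℝ)/6) ≠ ⊤ :=
        ENNReal.rpow_ne_top_of_nonneg (by norm_num) ENNReal.ofReal_ne_top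
      have := ENNReal.Tendsto.mul_const h2 (Or.inr hc)
      simpa using this
    have := (ENNReal.continuous_rpow_const (y := (3:ℝ)/5)).continuousAt
      (x := (0:ℝ≥0∞)) |>.tendsto.comp h3
    simpa [Function.comp_def, hBdef, ENNReal.zero_rpow_of_pos (by norm_num : (0:ℝ) < 3/5)] using this
  exact tendsto_of_tendsto_of_tendsto_of_le_of_le' tendsto_const_nhds hB0
    (Eventually.of_forall fun n => zero_le) hBle

lemma add_rpow_le {a b : ℝ} (ha : 0 ≤ a) (hb : 0 ≤ b) :
    (a+b) ^ ((5:ℝ)/3) ≤ 2 ^ ((5:ℝ)/3) * (a ^ ((5:ℝ)/3) + b ^ ((5:ℝ)/3)) := by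
  have key : ∀ c d : ℝ, 0 ≤ c → 0 ≤ d → c ≤ d →
      (c+d) ^ ((5:ℝ)/3) ≤ 2 ^ ((5:ℝ)/3) * (c ^ ((5:ℝ)/3) + d ^ ((5:ℝ)/3)) := by
    intro c d hc hd hcd
    have h1 : (c+d) ^ ((5:ℝ)/3) ≤ (2*d) ^ ((5:ℝ)/3) :=
      Real.rpow_le_rpow (by linarith) (by linarith) (by norm_num)
    have h2 : ((2:ℝ)*d) ^ ((5:ℝ)/3) = 2 ^ ((5:ℝ)/3) * d ^ ((5:ℝ)/3) :=
      Real.mul_rpow (by norm_num) hd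
    have h3 : (0:ℝ) ≤ c ^ ((5:ℝ)/3) := Real.rpow_nonneg hc _
    have h4 : (0:ℝ) < 2 ^ ((5:ℝ)/3) := Real.rpow_pos_of_pos (by norm_num) _
    nlinarith
  rcases le_total a b with h | h
  · exact key a b ha hb h
  · have := key b a hb ha h
    have e : b + a = a + b := by ring
    rw [e] at this
    linarith [this]

lemma eLpNorm_half_le (u : E3 → ℝ) :
    eLpNorm (fun x => (1/2) * u x) (5/3) volume ≤ eLpNorm u (5/3) volume := by
  refine eLpNorm_mono fun x => ?_
  rw [norm_mul]
  have h1 : ‖(1/2 : ℝ)‖ = 1/2 := by rw [Real.norm_eq_abs]; norm_num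
  rw [h1]
  nlinarith [norm_nonneg (u x)]

/-- **Strong convergence of two-spin TF-minimizing sequences**: if
`𝓔^TF_{(2)}[ρ_n, σ_n] → E^TF` with `∫(ρ_n + σ_n) = 1`, then
`ρ_n, σ_n → ρ^TF/2` strongly in `L^{5/3}`. -/
theorem TF_two_spin_minimizing_sequence_converges
    (V : E3 → ℝ) (hVm : Measurable V) (hVloc : LocBounded V)
    (hV0 : ∀ x, 0 ≤ V x) (hVinf : Tendsto V (cocompact E3) atTop)
    (ρTF : E3 → ℝ) (hρTF : IsTFMinimizer V ρTF)
    (ρ σ : ℕ → E3 → ℝ)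
    (hm : ∀ n, Measurable (ρ n) ∧ Measurable (σ n))
    (h0 : ∀ n, (∀ x, 0 ≤ ρ n x) ∧ (∀ x, 0 ≤ σ n x))
    (hLp : ∀ n, MemLp (ρ n) (5/3) volume ∧ MemLp (σ n) (5/3) volume)
    (hVint : ∀ n, Integrable (fun x => V x * (ρ n x + σ n x)) volume)
    (hmass : ∀ n, (∫ x, (ρ n x + σ n x)) = 1)
    (hmin : Tendsto (fun n => TF2fun V (ρ n) (σ n)) atTop (𝓝 (TFenergy V))) :
    Tendsto (fun n => eLpNorm (fun x => ρ n x - ρTF x / 2) (5/3) volume)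
        atTop (𝓝 0) ∧
    Tendsto (fun n => eLpNorm (fun x => σ n x - ρTF x / 2) (5/3) volume)
        atTop (𝓝 0) := by
  obtain ⟨⟨hTFm, hTF0, hTFLp, hTFVi, hTFmass⟩, hEeq⟩ := hρTF
  set E := TFenergy V with hEdef
  set τ : ℕ → E3 → ℝ := fun n x => ρ n x + σ n x with hτdef
  have hτm : ∀ n, Measurable (τ n) := fun n => ((hm n).1.add (hm n).2)
  have hτ0 : ∀ n x, 0 ≤ τ n x := fun n x => add_nonneg ((h0 n).1 x) ((h0 n).2 x)
  have hτLp : ∀ n, MemLp (τ n) (5/3) volume := fun n => ((hLp n).1.add (hLp n).2)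
  have hVτ : ∀ n, Integrable (fun x => V x * τ n x) volume := fun n => hVint n
  have hτmass : ∀ n, (∫ x, τ n x) = 1 := fun n => hmass n
  have hτadm : ∀ n, IsTFAdmissible V (τ n) :=
    fun n => ⟨hτm n, hτ0 n, hτLp n, hVτ n, hτmass n⟩
  have hEτ : ∀ n, E ≤ TFfun V (τ n) := fun n => TFenergy_le hV0 (hτadm n)
  -- integrability of rpow
  have hiρ : ∀ n, Integrable (fun x => ρ n x ^ ((5:ℝ)/3)) volume :=
    fun n => int_rpow (h0 n).1 (hLp n).1
  have hiσ : ∀ n, Integrable (fun x => σ n x ^ ((5:ℝ)/3)) volume :=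
    fun n => int_rpow (h0 n).2 (hLp n).2
  have hiτ : ∀ n, Integrable (fun x => τ n x ^ ((5:ℝ)/3)) volume :=
    fun n => int_rpow (hτ0 n) (hτLp n)
  have hiTF : Integrable (fun x => ρTF x ^ ((5:ℝ)/3)) volume := int_rpow hTF0 hTFLp
  have hiS : ∀ n, Integrable (fun x => (τ n x + ρTF x) ^ ((5:ℝ)/3)) volume :=
    fun n => int_rpow (fun x => add_nonneg (hτ0 n x) (hTF0 x)) ((hτLp n).add hTFLp)
  -- the two convexity defects
  set Δ1 : ℕ → ℝ := fun n => ∫ x, (ρ n x ^ ((5:ℝ)/3) + σ n x ^ ((5:ℝ)/3)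
      - 2 ^ (-(2:ℝ)/3) * (ρ n x + σ n x) ^ ((5:ℝ)/3)) with hΔ1def
  set Δ2 : ℕ → ℝ := fun n => ∫ x, (τ n x ^ ((5:ℝ)/3) + ρTF x ^ ((5:ℝ)/3)
      - 2 ^ (-(2:ℝ)/3) * (τ n x + ρTF x) ^ ((5:ℝ)/3)) with hΔ2def
  have hΔ1nn : ∀ n, 0 ≤ Δ1 n :=
    fun n => integral_nonneg fun x => defect_nonneg ((h0 n).1 x) ((h0 n).2 x)
  have hΔ2nn : ∀ n, 0 ≤ Δ2 n :=
    fun n => integral_nonneg fun x => defect_nonneg (hτ0 n x) (hTF0 x)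
  -- identity 1
  have ident1 : ∀ n, TF2fun V (ρ n) (σ n) = TFfun V (τ n) + cTF * Δ1 n := by
    intro n
    have hsum : Integrable (fun x => ρ n x ^ ((5:ℝ)/3) + σ n x ^ ((5:ℝ)/3)) volume :=
      (hiρ n).add (hiσ n)
    have hcm : Integrable (fun x => 2 ^ (-(2:ℝ)/3) * (ρ n x + σ n x) ^ ((5:ℝ)/3)) volume :=
      (hiτ n).const_mul _
    have e : Δ1 n = (∫ x, (ρ n x ^ ((5:ℝ)/3) + σ n x ^ ((5:ℝ)/3)))
        - 2 ^ (-(2:ℝ)/3) * ∫ x, (ρ n x + σ n x) ^ ((5:ℝ)/3) := by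
      simp only [hΔ1def]
      rw [integral_sub hsum hcm, integral_const_mul]
    unfold TF2fun TFfun
    rw [e]
    have eτ : (∫ x, τ n x ^ ((5:ℝ)/3)) = ∫ x, (ρ n x + σ n x) ^ ((5:ℝ)/3) := rfl
    have eV : (∫ x, V x * τ n x) = ∫ x, V x * (ρ n x + σ n x) := rfl
    rw [eτ, eV]
    ring
  -- the midpoint densities
  set mid : ℕ → E3 → ℝ := fun n x => (1/2) * (τ n x + ρTF x) with hmiddef
  have hτL1 : ∀ n, Integrable (τ n) volume :=
    fun n => integrable_of_pot hVinf hV0 (hτm n) (hτ0 n) (hτLp n) (hVτ n)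
  have hTFL1 : Integrable ρTF volume :=
    integrable_of_pot hVinf hV0 hTFm hTF0 hTFLp hTFVi
  have hmidadm : ∀ n, IsTFAdmissible V (mid n) := by
    intro n
    refine ⟨((hτm n).add hTFm).const_mul _,
      fun x => mul_nonneg (by norm_num) (add_nonneg (hτ0 n x) (hTF0 x)),
      ((hτLp n).add hTFLp).const_mul _, ?_, ?_⟩
    · refine (((hVτ n).add hTFVi).const_mul (1/2)).congr
        (Eventually.of_forall fun x => ?_)
      simp only [Pi.add_apply, hmiddef, hτdef]
      ring
    · have : (∫ x, mid n x) = (1/2) * ((∫ x, τ n x) + ∫ x, ρTF x) := by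
        rw [hmiddef, integral_const_mul, integral_add (hτL1 n) hTFL1]
      rw [this, hτmass n, hTFmass]
      norm_num
  have hEmid : ∀ n, E ≤ TFfun V (mid n) := fun n => TFenergy_le hV0 (hmidadm n)
  -- identity 2
  have r2 : 2 * ((1/2):ℝ) ^ ((5:ℝ)/3) = 2 ^ (-(2:ℝ)/3) := by
    rw [one_div, Real.inv_rpow (by norm_num), ← Real.rpow_neg (by norm_num)]
    nth_rewrite 1 [show (2:ℝ) = 2 ^ (1:ℝ) by rw [Real.rpow_one]]
    rw [← Real.rpow_add (by norm_num)]
    norm_num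
  have ident2 : ∀ n, TFfun V (τ n) + TFfun V ρTF
      = 2 * TFfun V (mid n) + 2 ^ (-(2:ℝ)/3) * cTF * Δ2 n := by
    intro n
    have hsum2 : Integrable (fun x => τ n x ^ ((5:ℝ)/3) + ρTF x ^ ((5:ℝ)/3)) volume :=
      (hiτ n).add hiTF
    have hcm2 : Integrable (fun x => 2 ^ (-(2:ℝ)/3) * (τ n x + ρTF x) ^ ((5:ℝ)/3)) volume :=
      (hiS n).const_mul _
    have e2 : Δ2 n = (∫ x, τ n x ^ ((5:ℝ)/3)) + (∫ x, ρTF x ^ ((5:ℝ)/3))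
        - 2 ^ (-(2:ℝ)/3) * ∫ x, (τ n x + ρTF x) ^ ((5:ℝ)/3) := by
      simp only [hΔ2def]
      rw [integral_sub hsum2 hcm2, integral_add (hiτ n) hiTF, integral_const_mul]
    have emid : (∫ x, mid n x ^ ((5:ℝ)/3))
        = ((1/2:ℝ)) ^ ((5:ℝ)/3) * ∫ x, (τ n x + ρTF x) ^ ((5:ℝ)/3) := by
      rw [← integral_const_mul]
      refine integral_congr_ae (Eventually.of_forall fun x => ?_)
      simp only [hmiddef]
      rw [Real.mul_rpow (by norm_num) (add_nonneg (hτ0 n x) (hTF0 x))]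
    have emidV : (∫ x, V x * mid n x)
        = (1/2) * ((∫ x, V x * τ n x) + ∫ x, V x * ρTF x) := by
      rw [← integral_add (hVτ n) hTFVi, ← integral_const_mul]
      refine integral_congr_ae (Eventually.of_forall fun x => ?_)
      simp only [hmiddef]
      ring
    unfold TFfun
    rw [e2, emid, emidV]
    linear_combination (-(2:ℝ) ^ (-(2:ℝ)/3) * cTF * (∫ x, (τ n x + ρTF x) ^ ((5:ℝ)/3))) * r2
  -- the excess energy
  set a : ℕ → ℝ := fun n => TF2fun V (ρ n) (σ n) - E with hadef
  have ha0 : Tendsto a atTop (𝓝 0) := by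
    have := hmin.sub_const E
    simpa [hadef] using this
  have hTF2ge : ∀ n, TFfun V (τ n) ≤ TF2fun V (ρ n) (σ n) := by
    intro n
    have := hΔ1nn n
    have := cTF_pos
    nlinarith [ident1 n]
  have hann : ∀ n, 0 ≤ a n := fun n => by
    have := hEτ n
    have := hTF2ge n
    simp only [hadef]
    linarith
  have hc1 : (0:ℝ) < 2 ^ (-(2:ℝ)/3) * cTF :=
    mul_pos (Real.rpow_pos_of_pos (by norm_num) _) cTF_pos
  -- Δ1, Δ2 tend to zero
  have hΔ1le : ∀ n, Δ1 n ≤ a n / cTF := by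
    intro n
    rw [le_div_iff₀ cTF_pos]
    have h1 := ident1 n
    have h2 := hEτ n
    simp only [hadef]
    nlinarith
  have hΔ2le : ∀ n, Δ2 n ≤ a n / (2 ^ (-(2:ℝ)/3) * cTF) := by
    intro n
    rw [le_div_iff₀ hc1]
    have h1 := ident2 n
    have h2 := hEmid n
    have h3 := hEτ n
    have h4 := hTF2ge n
    simp only [hadef]
    nlinarith [hEeq]
  have hΔ1t : Tendsto Δ1 atTop (𝓝 0) := by
    refine tendsto_of_tendsto_of_tendsto_of_le_of_le tendsto_const_nhds ?_ hΔ1nn hΔ1le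
    have := ha0.div_const cTF
    simpa using this
  have hΔ2t : Tendsto Δ2 atTop (𝓝 0) := by
    refine tendsto_of_tendsto_of_tendsto_of_le_of_le tendsto_const_nhds ?_ hΔ2nn hΔ2le
    have := ha0.div_const (2 ^ (-(2:ℝ)/3) * cTF)
    simpa using this
  -- eventual mass bounds
  set M1 : ℝ := (E + 1) / (2 ^ (-(2:ℝ)/3) * cTF) with hM1def
  have hev1 : ∀ᶠ n in atTop, a n ≤ 1 := by
    have : ∀ᶠ n in atTop, a n < 1 :=
      ha0.eventually (eventually_lt_nhds (by norm_num : (0:ℝ) < 1))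
    exact this.mono fun n hn => hn.le
  have hMτ : ∀ᶠ n in atTop, (∫ x, (ρ n x + σ n x) ^ ((5:ℝ)/3)) ≤ M1 := by
    filter_upwards [hev1] with n hn
    have h1 : 2 ^ (-(2:ℝ)/3) * cTF * (∫ x, (ρ n x + σ n x) ^ ((5:ℝ)/3))
        ≤ TFfun V (τ n) := by
      have hVpos : 0 ≤ ∫ x, V x * τ n x :=
        integral_nonneg fun x => mul_nonneg (hV0 x) (hτ0 n x)
      unfold TFfun
      have eτ : (∫ x, τ n x ^ ((5:ℝ)/3)) = ∫ x, (ρ n x + σ n x) ^ ((5:ℝ)/3) := rfl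
      rw [← eτ]
      linarith
    have h2 := hTF2ge n
    have h3 : TF2fun V (ρ n) (σ n) ≤ E + 1 := by
      have := hn
      simp only [hadef] at this
      linarith
    rw [hM1def, le_div_iff₀ hc1]
    nlinarith
  set M2 : ℝ := 2 ^ ((5:ℝ)/3) * (M1 + ∫ x, ρTF x ^ ((5:ℝ)/3)) with hM2def
  have hMS : ∀ᶠ n in atTop, (∫ x, (τ n x + ρTF x) ^ ((5:ℝ)/3)) ≤ M2 := by
    filter_upwards [hMτ] with n hn
    have h1 : (∫ x, (τ n x + ρTF x) ^ ((5:ℝ)/3))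
        ≤ ∫ x, 2 ^ ((5:ℝ)/3) * (τ n x ^ ((5:ℝ)/3) + ρTF x ^ ((5:ℝ)/3)) := by
      refine integral_mono (hiS n) (((hiτ n).add hiTF).const_mul _) fun x => ?_
      exact add_rpow_le (hτ0 n x) (hTF0 x)
    rw [integral_const_mul, integral_add (hiτ n) hiTF] at h1
    have h2 : (0:ℝ) ≤ 2 ^ ((5:ℝ)/3) := Real.rpow_nonneg (by norm_num) _
    have eτ : (∫ x, τ n x ^ ((5:ℝ)/3)) = ∫ x, (ρ n x + σ n x) ^ ((5:ℝ)/3) := rfl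
    rw [hM2def]
    nlinarith [hn]
  -- apply the convergence lemma to both pairs
  have conv1 : Tendsto (fun n => eLpNorm (fun x => ρ n x - σ n x) (5/3) volume)
      atTop (𝓝 0) :=
    conv_lemma ρ σ (fun n => (hm n).1) (fun n => (hm n).2)
      (fun n => (h0 n).1) (fun n => (h0 n).2)
      (fun n => (hLp n).1) (fun n => (hLp n).2) M1 hMτ hΔ1t
  have conv2 : Tendsto (fun n => eLpNorm (fun x => τ n x - ρTF x) (5/3) volume)
      atTop (𝓝 0) :=
    conv_lemma τ (fun _ => ρTF) hτm (fun _ => hTFm) hτ0 (fun _ => hTF0)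
      hτLp (fun _ => hTFLp) M2 hMS hΔ2t
  have hsum : Tendsto (fun n => eLpNorm (fun x => ρ n x - σ n x) (5/3) volume
      + eLpNorm (fun x => τ n x - ρTF x) (5/3) volume) atTop (𝓝 0) := by
    have := conv1.add conv2
    simpa using this
  constructor
  · refine tendsto_of_tendsto_of_tendsto_of_le_of_le tendsto_const_nhds hsum
      (fun n => zero_le) (fun n => ?_)
    have hdecomp : (fun x => ρ n x - ρTF x / 2)
        = fun x => (1/2) * (ρ n x - σ n x) + (1/2) * (τ n x - ρTF x) := by
      funext x
      simp only [hτdef]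
      ring
    rw [hdecomp]
    refine le_trans (eLpNorm_add_le
      ((((hm n).1.sub (hm n).2).const_mul _).aestronglyMeasurable)
      ((((hτm n).sub hTFm).const_mul _).aestronglyMeasurable) one_le_p53) ?_
    exact add_le_add (eLpNorm_half_le _) (eLpNorm_half_le _)
  · refine tendsto_of_tendsto_of_tendsto_of_le_of_le tendsto_const_nhds hsum
      (fun n => zero_le) (fun n => ?_)
    have hdecomp : (fun x => σ n x - ρTF x / 2)
        = fun x => (1/2) * (σ n x - ρ n x) + (1/2) * (τ n x - ρTF x) := by
      funext x
      simp only [hτdef]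
      ring
    rw [hdecomp]
    refine le_trans (eLpNorm_add_le
      ((((hm n).2.sub (hm n).1).const_mul _).aestronglyMeasurable)
      ((((hτm n).sub hTFm).const_mul _).aestronglyMeasurable) one_le_p53) ?_
    refine add_le_add (le_trans (eLpNorm_half_le _) ?_) (eLpNorm_half_le _)
    refine eLpNorm_mono fun x => ?_
    rw [Real.norm_eq_abs, Real.norm_eq_abs, abs_sub_comm]
end
end

section
/- (Strong convergence of TF-minimizing sequences.) Let (ρ_n) be a sequence of measurable functions ρ_n : ℝ³ → [0,∞) with ∫_{ℝ³} ρ_n = 1 such that 𝓔^TF[ρ_n] → E^TF as n → ∞. Then ρ_n → ρ^TF strongly in L^{5/3}(ℝ³). -/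
open MeasureTheory Filter Topology
open scoped ENNReal NNReal

noncomputable section

/-- Uniform-convexity-type gap inequality for `x ^ (5/3)`. -/
lemma tf_key {s a b : ℝ} (hs : 0 < s) (ha : 0 ≤ a) (hb : 0 ≤ b) (hab : a + b = s) :
    (5/18) * (a - b)^2 * s ^ (-(1:ℝ)/3) ≤
      a ^ ((5:ℝ)/3) + b ^ ((5:ℝ)/3) - 2 * (((a+b)/2) ^ ((5:ℝ)/3)) := by
  set c : ℝ := s ^ (-(1:ℝ)/3) with hc
  have hc0 : 0 < c := Real.rpow_pos_of_pos hs _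
  set f : ℝ → ℝ := fun x => x ^ ((5:ℝ)/3) - (5/9) * c * x^2 with hf
  set f' : ℝ → ℝ := fun x => (5/3) * x ^ ((2:ℝ)/3) - (10/9) * c * x with hf'
  set f'' : ℝ → ℝ := fun x => (10/9) * x ^ (-(1:ℝ)/3) - (10/9) * c with hf''
  have hint : interior (Set.Icc (0:ℝ) s) = Set.Ioo 0 s := interior_Icc
  have hconv : ConvexOn ℝ (Set.Icc (0:ℝ) s) f := by
    apply convexOn_of_hasDerivWithinAt2_nonneg (f' := f') (f'' := f'') (convex_Icc 0 s)
    · apply ContinuousOn.sub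
      · exact fun x hx =>
          (Real.continuousAt_rpow_const x _ (Or.inr (by norm_num))).continuousWithinAt
      · fun_prop
    · intro x hx
      rw [hint] at hx
      have h1 : HasDerivAt (fun x : ℝ => x ^ ((5:ℝ)/3)) ((5/3) * x ^ ((2:ℝ)/3)) x := by
        have := Real.hasDerivAt_rpow_const (x := x) (p := (5:ℝ)/3) (Or.inl hx.1.ne')
        convert this using 1
        norm_num
      have h2 : HasDerivAt (fun x : ℝ => (5/9) * c * x^2) ((10/9) * c * x) x := by
        have := (hasDerivAt_pow 2 x).const_mul ((5/9) * c)
        exact this.congr_deriv (by push_cast; ring)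
      exact ((h1.sub h2).hasDerivWithinAt)
    · intro x hx
      rw [hint] at hx
      have h1 : HasDerivAt (fun x : ℝ => (5/3) * x ^ ((2:ℝ)/3)) ((10/9) * x ^ (-(1:ℝ)/3)) x := by
        have := (Real.hasDerivAt_rpow_const (x := x) (p := (2:ℝ)/3) (Or.inl hx.1.ne')).const_mul
          ((5:ℝ)/3)
        rw [show (2:ℝ)/3 - 1 = -(1:ℝ)/3 by norm_num] at this
        exact this.congr_deriv (by ring)
      have h2 : HasDerivAt (fun x : ℝ => (10/9) * c * x) ((10/9) * c) x := by
        simpa using (hasDerivAt_id x).const_mul ((10/9) * c)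
      exact (h1.sub h2).hasDerivWithinAt
    · intro x hx
      rw [hint] at hx
      have : c ≤ x ^ (-(1:ℝ)/3) :=
        Real.rpow_le_rpow_of_nonpos hx.1 hx.2.le (by norm_num)
      simp only [hf'']
      nlinarith
  have hmema : a ∈ Set.Icc (0:ℝ) s := ⟨ha, by linarith⟩
  have hmemb : b ∈ Set.Icc (0:ℝ) s := ⟨hb, by linarith⟩
  have hmid := hconv.2 hmema hmemb (by norm_num : (0:ℝ) ≤ 1/2) (by norm_num : (0:ℝ) ≤ 1/2)
    (by norm_num)
  simp only [smul_eq_mul, hf] at hmid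
  have harg : (1/2 : ℝ) * a + (1/2) * b = (a+b)/2 := by ring
  rw [harg] at hmid
  nlinarith [hmid, hc0.le, sq_nonneg (a - b)]

/-- The convexity gap is nonnegative. -/
lemma tf_gap_nonneg {a b : ℝ} (ha : 0 ≤ a) (hb : 0 ≤ b) :
    0 ≤ a ^ ((5:ℝ)/3) + b ^ ((5:ℝ)/3) - 2 * (((a+b)/2) ^ ((5:ℝ)/3)) := by
  rcases eq_or_lt_of_le (by positivity : (0:ℝ) ≤ a + b) with h | h
  · have ha0 : a = 0 := by linarith
    have hb0 : b = 0 := by linarith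
    simp [ha0, hb0, Real.zero_rpow (by norm_num : ((5:ℝ)/3) ≠ 0)]
  · refine le_trans ?_ (tf_key h ha hb rfl)
    positivity

/-- Pointwise inequality feeding into Hölder. -/
lemma tf_pointwise {a b : ℝ} (ha : 0 ≤ a) (hb : 0 ≤ b) :
    |a - b| ^ ((5:ℝ)/3) ≤
      ((18/5) * (a ^ ((5:ℝ)/3) + b ^ ((5:ℝ)/3) - 2 * (((a+b)/2) ^ ((5:ℝ)/3)))) ^ ((5:ℝ)/6) *
        ((a + b) ^ ((5:ℝ)/3)) ^ ((1:ℝ)/6) := by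
  set w : ℝ := a ^ ((5:ℝ)/3) + b ^ ((5:ℝ)/3) - 2 * (((a+b)/2) ^ ((5:ℝ)/3)) with hwdef
  have hw : 0 ≤ w := tf_gap_nonneg ha hb
  rcases eq_or_lt_of_le (by positivity : (0:ℝ) ≤ a + b) with h | hs
  · have ha0 : a = 0 := by linarith
    have hb0 : b = 0 := by linarith
    have hz : ((0:ℝ)) ^ ((5:ℝ)/3) = 0 := Real.zero_rpow (by norm_num)
    simp only [ha0, hb0, sub_zero, abs_zero, add_zero, zero_div, hz, mul_zero, sub_self,
      zero_add]
    rw [Real.zero_rpow (by norm_num : ((1:ℝ)/6) ≠ 0), mul_zero]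
  · set s := a + b with hsd
    have hkey := tf_key hs ha hb rfl
    have hcs : s ^ (-(1:ℝ)/3) * s ^ ((1:ℝ)/3) = 1 := by
      rw [← Real.rpow_add hs]; norm_num
    have hsp : (0:ℝ) < s ^ ((1:ℝ)/3) := Real.rpow_pos_of_pos hs _
    have h1 : (a - b)^2 ≤ (18/5) * w * s ^ ((1:ℝ)/3) := by
      nlinarith [mul_le_mul_of_nonneg_right hkey hsp.le]
    have h2 : ((a-b)^2) ^ ((5:ℝ)/6) ≤ ((18/5) * w * s ^ ((1:ℝ)/3)) ^ ((5:ℝ)/6) :=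
      Real.rpow_le_rpow (sq_nonneg _) h1 (by norm_num)
    have hLHS : |a - b| ^ ((5:ℝ)/3) = ((a-b)^2) ^ ((5:ℝ)/6) := by
      rw [← sq_abs, ← Real.rpow_natCast |a-b| 2, ← Real.rpow_mul (abs_nonneg _)]
      norm_num
    have hRHS : ((18/5) * w * s ^ ((1:ℝ)/3)) ^ ((5:ℝ)/6)
        = ((18/5) * w) ^ ((5:ℝ)/6) * (s ^ ((5:ℝ)/3)) ^ ((1:ℝ)/6) := by
      rw [Real.mul_rpow (by positivity) hsp.le, ← Real.rpow_mul hs.le,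
        ← Real.rpow_mul hs.le]
      norm_num
    rw [hLHS, ← hRHS]
    exact h2

/-- Crude bound `(a+b)^{5/3} ≤ 4 (a^{5/3} + b^{5/3})` for nonnegative reals. -/
lemma tf_add_rpow_le {a b : ℝ} (ha : 0 ≤ a) (hb : 0 ≤ b) :
    (a + b) ^ ((5:ℝ)/3) ≤ 4 * (a ^ ((5:ℝ)/3) + b ^ ((5:ℝ)/3)) := by
  have h4 : ((2:ℝ)) ^ ((5:ℝ)/3) ≤ 4 := by
    have h1 : ((2:ℝ)) ^ ((5:ℝ)/3) ≤ (2:ℝ) ^ ((2:ℝ)) :=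
      Real.rpow_le_rpow_of_exponent_le one_le_two (by norm_num)
    have h2 : ((2:ℝ)) ^ ((2:ℝ)) = 4 := by
      rw [show ((2:ℝ):ℝ) = ((2:ℕ):ℝ) by norm_num, Real.rpow_natCast]; norm_num
    linarith
  have key : ∀ u v : ℝ, 0 ≤ u → 0 ≤ v → u ≤ v →
      (u + v) ^ ((5:ℝ)/3) ≤ 4 * (u ^ ((5:ℝ)/3) + v ^ ((5:ℝ)/3)) := by
    intro u v hu hv huv
    have h1 : u + v ≤ 2 * v := by linarith
    have h2 : (u + v) ^ ((5:ℝ)/3) ≤ (2 * v) ^ ((5:ℝ)/3) :=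
      Real.rpow_le_rpow (by positivity) h1 (by norm_num)
    have h3 : (2 * v) ^ ((5:ℝ)/3) = (2:ℝ) ^ ((5:ℝ)/3) * v ^ ((5:ℝ)/3) :=
      Real.mul_rpow (by norm_num) hv
    have h5 : (0:ℝ) ≤ v ^ ((5:ℝ)/3) := Real.rpow_nonneg hv _
    have h6 : (0:ℝ) ≤ u ^ ((5:ℝ)/3) := Real.rpow_nonneg hu _
    nlinarith
  rcases le_total a b with h | h
  · exact key a b ha hb h
  · have := key b a hb ha h
    rw [add_comm b a] at this
    linarith

/-- **Strong convergence of TF-minimizing sequences**: if `𝓔^TF[ρ_n] → E^TF`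
with `∫ ρ_n = 1`, then `ρ_n → ρ^TF` strongly in `L^{5/3}`. -/
theorem TF_minimizing_sequence_converges
    (V : E3 → ℝ) (hVm : Measurable V) (hVloc : LocBounded V)
    (hV0 : ∀ x, 0 ≤ V x) (hVinf : Tendsto V (cocompact E3) atTop)
    (ρTF : E3 → ℝ) (hρTF : IsTFMinimizer V ρTF)
    (ρ : ℕ → E3 → ℝ)
    (hm : ∀ n, Measurable (ρ n)) (h0 : ∀ n x, 0 ≤ ρ n x)
    (hLp : ∀ n, MemLp (ρ n) (5/3) volume)
    (hVint : ∀ n, Integrable (fun x => V x * ρ n x) volume)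
    (hmass : ∀ n, (∫ x, ρ n x) = 1)
    (hmin : Tendsto (fun n => TFfun V (ρ n)) atTop (𝓝 (TFenergy V))) :
    Tendsto (fun n => eLpNorm (fun x => ρ n x - ρTF x) (5/3) volume)
      atTop (𝓝 0) := by
  obtain ⟨⟨hTFm, hTF0, hTFLp, hTFVi, hTFmass⟩, hTFeq⟩ := hρTF
  have hpi := Real.pi_pos
  have hK : 0 < (2:ℝ) ^ (-(2:ℝ)/3) * cTF := by unfold cTF; positivity
  have hp53 : ((5:ℝ≥0∞)/3).toReal = 5/3 := by rw [ENNReal.toReal_div]; norm_num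
  have hpne0 : (5/3 : ℝ≥0∞) ≠ 0 := by norm_num
  have hpnetop : (5/3 : ℝ≥0∞) ≠ ⊤ := (ENNReal.div_lt_top (by norm_num) (by norm_num)).ne
  -- integrability of `g ^ (5/3)` for admissible g
  have hInt53 : ∀ g : E3 → ℝ, (∀ x, 0 ≤ g x) → MemLp g (5/3) volume →
      Integrable (fun x => g x ^ ((5:ℝ)/3)) volume := by
    intro g hg hgLp
    have h := hgLp.integrable_norm_rpow hpne0 hpnetop
    rw [hp53] at h
    exact h.congr (Eventually.of_forall fun x => by
      simp only [Real.norm_of_nonneg (hg x)])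
  have hmassInt : ∀ n, Integrable (ρ n) volume := by
    intro n
    by_contra h
    have := hmass n
    rw [integral_undef h] at this
    norm_num at this
  have hTFInt : Integrable ρTF volume := by
    by_contra h
    rw [integral_undef h] at hTFmass
    norm_num at hTFmass
  -- midpoints and convexity gaps
  set mid : ℕ → E3 → ℝ := fun n x => (ρ n x + ρTF x)/2 with hmiddef
  set w : ℕ → E3 → ℝ := fun n x =>
    ρ n x ^ ((5:ℝ)/3) + ρTF x ^ ((5:ℝ)/3) - 2 * (mid n x) ^ ((5:ℝ)/3) with hwdef
  have hmid0 : ∀ n x, 0 ≤ mid n x := fun n x => by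
    have := h0 n x; have := hTF0 x
    simp only [hmiddef]; positivity
  have hmidm : ∀ n, Measurable (mid n) := fun n => ((hm n).add hTFm).div_const 2
  have hmidLp : ∀ n, MemLp (mid n) (5/3) volume := fun n => by
    have h2 : mid n = fun x => (2:ℝ)⁻¹ * (ρ n x + ρTF x) := by
      funext x; simp only [hmiddef]; ring
    rw [h2]; exact ((hLp n).add hTFLp).const_mul _
  have hI5 : ∀ n, Integrable (fun x => ρ n x ^ ((5:ℝ)/3)) volume :=
    fun n => hInt53 _ (h0 n) (hLp n)
  have hI5TF : Integrable (fun x => ρTF x ^ ((5:ℝ)/3)) volume := hInt53 _ hTF0 hTFLp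
  have hI5mid : ∀ n, Integrable (fun x => mid n x ^ ((5:ℝ)/3)) volume :=
    fun n => hInt53 _ (hmid0 n) (hmidLp n)
  have hw0 : ∀ n x, 0 ≤ w n x := fun n x => tf_gap_nonneg (h0 n x) (hTF0 x)
  have hIw : ∀ n, Integrable (w n) volume :=
    fun n => ((hI5 n).add hI5TF).sub ((hI5mid n).const_mul 2)
  set d : ℕ → ℝ := fun n => ∫ x, w n x with hddef
  -- Step A : `d n → 0`
  have hVmidfun : ∀ n, (fun x => V x * mid n x)
      = fun x => (V x * ρ n x)/2 + (V x * ρTF x)/2 := fun n =>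
    funext fun x => by simp only [hmiddef]; ring
  have hVmid : ∀ n, Integrable (fun x => V x * mid n x) volume := fun n => by
    rw [hVmidfun n]; exact ((hVint n).div_const 2).add (hTFVi.div_const 2)
  have hadm : ∀ n, IsTFAdmissible V (mid n) := fun n =>
    ⟨hmidm n, hmid0 n, hmidLp n, hVmid n, by
      simp only [hmiddef]
      rw [integral_div, integral_add (hmassInt n) hTFInt, hmass n, hTFmass]
      norm_num⟩
  have hbdd : BddBelow {e | ∃ ρ', IsTFAdmissible V ρ' ∧ e = TFfun V ρ'} := by
    refine ⟨0, ?_⟩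
    rintro e ⟨ρ', hρ', rfl⟩
    have h1 : 0 ≤ ∫ x, ρ' x ^ ((5:ℝ)/3) :=
      integral_nonneg fun x => Real.rpow_nonneg (hρ'.2.1 x) _
    have h2 : 0 ≤ ∫ x, V x * ρ' x :=
      integral_nonneg fun x => mul_nonneg (hV0 x) (hρ'.2.1 x)
    unfold TFfun
    nlinarith [hK]
  have hEmin : ∀ n, TFenergy V ≤ TFfun V (mid n) := fun n =>
    csInf_le hbdd ⟨mid n, hadm n, rfl⟩
  have hdn : ∀ n, (2:ℝ)^(-(2:ℝ)/3) * cTF * d n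
      = TFfun V (ρ n) + TFfun V ρTF - 2 * TFfun V (mid n) := by
    intro n
    have e1 : d n = (∫ x, ρ n x ^ ((5:ℝ)/3)) + (∫ x, ρTF x ^ ((5:ℝ)/3))
        - 2 * ∫ x, mid n x ^ ((5:ℝ)/3) := by
      have ha1 : Integrable (fun x => ρ n x ^ ((5:ℝ)/3) + ρTF x ^ ((5:ℝ)/3)) volume :=
        (hI5 n).add hI5TF
      have ha2 : Integrable (fun x => 2 * mid n x ^ ((5:ℝ)/3)) volume :=
        (hI5mid n).const_mul 2
      simp only [hddef, hwdef]
      rw [integral_sub ha1 ha2, integral_add (hI5 n) hI5TF, integral_const_mul]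
    have e2 : (∫ x, V x * mid n x)
        = ((∫ x, V x * ρ n x) + ∫ x, V x * ρTF x)/2 := by
      rw [hVmidfun n, integral_add ((hVint n).div_const 2) (hTFVi.div_const 2),
        integral_div, integral_div]
      ring
    unfold TFfun
    rw [e1, e2]
    ring
  have hd0 : ∀ n, 0 ≤ d n := fun n => integral_nonneg (hw0 n)
  have hdle : ∀ n, d n ≤ (TFfun V (ρ n) - TFenergy V) / ((2:ℝ)^(-(2:ℝ)/3) * cTF) := by
    intro n
    rw [le_div_iff₀ hK]
    have h1 := hdn n
    have h2 := hEmin n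
    rw [hTFeq] at h1
    nlinarith
  have hdtend : Tendsto d atTop (𝓝 0) := by
    apply squeeze_zero hd0 hdle
    have h1 : Tendsto (fun n => TFfun V (ρ n) - TFenergy V) atTop (𝓝 0) := by
      simpa using hmin.sub (tendsto_const_nhds (x := TFenergy V))
    simpa using h1.div_const ((2:ℝ)^(-(2:ℝ)/3) * cTF)
  -- Step B : uniform bound on the companion factor
  obtain ⟨T, hT⟩ := hmin.bddAbove_range
  have hA : ∀ n, (∫ x, ρ n x ^ ((5:ℝ)/3)) ≤ T / ((2:ℝ)^(-(2:ℝ)/3) * cTF) := by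
    intro n
    rw [le_div_iff₀ hK]
    have h1 : TFfun V (ρ n) ≤ T := hT ⟨n, rfl⟩
    have h2 : 0 ≤ ∫ x, V x * ρ n x :=
      integral_nonneg fun x => mul_nonneg (hV0 x) (h0 n x)
    unfold TFfun at h1
    nlinarith
  set C : ℝ≥0∞ :=
    ENNReal.ofReal (4 * (T / ((2:ℝ)^(-(2:ℝ)/3) * cTF) + ∫ x, ρTF x ^ ((5:ℝ)/3))) with hCdef
  have hG : ∀ n, (∫⁻ x, ENNReal.ofReal ((ρ n x + ρTF x) ^ ((5:ℝ)/3))) ≤ C := by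
    intro n
    have step1 : (∫⁻ x, ENNReal.ofReal ((ρ n x + ρTF x) ^ ((5:ℝ)/3)))
        ≤ ∫⁻ x, ENNReal.ofReal (4 * (ρ n x ^ ((5:ℝ)/3) + ρTF x ^ ((5:ℝ)/3))) :=
      lintegral_mono fun x =>
        ENNReal.ofReal_le_ofReal (tf_add_rpow_le (h0 n x) (hTF0 x))
    have step2 : (∫⁻ x, ENNReal.ofReal (4 * (ρ n x ^ ((5:ℝ)/3) + ρTF x ^ ((5:ℝ)/3))))
        = ENNReal.ofReal (∫ x, 4 * (ρ n x ^ ((5:ℝ)/3) + ρTF x ^ ((5:ℝ)/3))) := by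
      have hsum : Integrable (fun x => 4 * (ρ n x ^ ((5:ℝ)/3) + ρTF x ^ ((5:ℝ)/3))) volume :=
        ((hI5 n).add hI5TF).const_mul 4
      rw [ofReal_integral_eq_lintegral_ofReal hsum
        (Eventually.of_forall fun x => mul_nonneg (by norm_num)
          (add_nonneg (Real.rpow_nonneg (h0 n x) _) (Real.rpow_nonneg (hTF0 x) _)))]
    have step3 : (∫ x, 4 * (ρ n x ^ ((5:ℝ)/3) + ρTF x ^ ((5:ℝ)/3)))
        ≤ 4 * (T / ((2:ℝ)^(-(2:ℝ)/3) * cTF) + ∫ x, ρTF x ^ ((5:ℝ)/3)) := by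
      rw [integral_const_mul, integral_add (hI5 n) hI5TF]
      nlinarith [hA n]
    calc (∫⁻ x, ENNReal.ofReal ((ρ n x + ρTF x) ^ ((5:ℝ)/3)))
        ≤ ∫⁻ x, ENNReal.ofReal (4 * (ρ n x ^ ((5:ℝ)/3) + ρTF x ^ ((5:ℝ)/3))) := step1
      _ = ENNReal.ofReal (∫ x, 4 * (ρ n x ^ ((5:ℝ)/3) + ρTF x ^ ((5:ℝ)/3))) := step2
      _ ≤ C := ENNReal.ofReal_le_ofReal step3
  -- Step C : Hölder
  have hwm : ∀ n, Measurable (w n) := fun n => by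
    apply Measurable.sub
    · exact ((hm n).pow measurable_const).add (hTFm.pow measurable_const)
    · exact ((((hm n).add hTFm).div_const 2).pow measurable_const).const_mul 2
  have hLle : ∀ n, (∫⁻ x, (‖ρ n x - ρTF x‖₊ : ℝ≥0∞) ^ ((5:ℝ)/3)) ≤
      (ENNReal.ofReal (18/5) * ENNReal.ofReal (d n)) ^ ((5:ℝ)/6) * C ^ ((1:ℝ)/6) := by
    intro n
    set f : E3 → ℝ≥0∞ := fun x => (ENNReal.ofReal ((18/5) * w n x)) ^ ((5:ℝ)/6) with hfdef
    set g : E3 → ℝ≥0∞ :=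
      fun x => (ENNReal.ofReal ((ρ n x + ρTF x) ^ ((5:ℝ)/3))) ^ ((1:ℝ)/6) with hgdef
    have hfm : AEMeasurable f volume :=
      ((ENNReal.measurable_ofReal.comp ((hwm n).const_mul _)).pow
        measurable_const).aemeasurable
    have hgm : AEMeasurable g volume :=
      ((ENNReal.measurable_ofReal.comp
        (((hm n).add hTFm).pow measurable_const)).pow measurable_const).aemeasurable
    have hpw : ∀ x, (‖ρ n x - ρTF x‖₊ : ℝ≥0∞) ^ ((5:ℝ)/3) ≤ (f * g) x := by
      intro x
      rw [← enorm_eq_nnnorm, Real.enorm_eq_ofReal_abs,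
        ENNReal.ofReal_rpow_of_nonneg (abs_nonneg _) (by norm_num)]
      simp only [hfdef, hgdef, Pi.mul_apply]
      rw [ENNReal.ofReal_rpow_of_nonneg (mul_nonneg (by norm_num) (hw0 n x))
          (by norm_num : (0:ℝ) ≤ 5/6),
        ENNReal.ofReal_rpow_of_nonneg
          (Real.rpow_nonneg (add_nonneg (h0 n x) (hTF0 x)) _)
          (by norm_num : (0:ℝ) ≤ 1/6),
        ← ENNReal.ofReal_mul (Real.rpow_nonneg (mul_nonneg (by norm_num) (hw0 n x)) _)]
      exact ENNReal.ofReal_le_ofReal (tf_pointwise (h0 n x) (hTF0 x))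
    have hold := ENNReal.lintegral_mul_le_Lp_mul_Lq volume
      (⟨by norm_num, by norm_num, by norm_num⟩ : Real.HolderConjugate (6/5) 6) hfm hgm
    have hf65 : (∫⁻ x, f x ^ ((6:ℝ)/5))
        = ENNReal.ofReal (18/5) * ENNReal.ofReal (d n) := by
      have e1 : ∀ x, f x ^ ((6:ℝ)/5)
          = ENNReal.ofReal (18/5) * ENNReal.ofReal (w n x) := by
        intro x
        simp only [hfdef]
        rw [← ENNReal.rpow_mul]
        norm_num
      rw [lintegral_congr e1,
        lintegral_const_mul _ (hwm n).ennreal_ofReal,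
        ← ofReal_integral_eq_lintegral_ofReal (hIw n)
          (Eventually.of_forall fun x => hw0 n x)]
    have hg6 : (∫⁻ x, g x ^ ((6:ℝ)))
        = ∫⁻ x, ENNReal.ofReal ((ρ n x + ρTF x) ^ ((5:ℝ)/3)) := by
      apply lintegral_congr
      intro x
      simp only [hgdef]
      rw [← ENNReal.rpow_mul]
      norm_num
    calc (∫⁻ x, (‖ρ n x - ρTF x‖₊ : ℝ≥0∞) ^ ((5:ℝ)/3))
        ≤ ∫⁻ x, (f * g) x := lintegral_mono hpw
      _ ≤ (∫⁻ x, f x ^ ((6:ℝ)/5)) ^ (1/((6:ℝ)/5)) * (∫⁻ x, g x ^ ((6:ℝ))) ^ (1/(6:ℝ)) :=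
          hold
      _ = (ENNReal.ofReal (18/5) * ENNReal.ofReal (d n)) ^ ((5:ℝ)/6) *
          (∫⁻ x, ENNReal.ofReal ((ρ n x + ρTF x) ^ ((5:ℝ)/3))) ^ ((1:ℝ)/6) := by
          rw [hf65, hg6]
          norm_num
      _ ≤ (ENNReal.ofReal (18/5) * ENNReal.ofReal (d n)) ^ ((5:ℝ)/6) * C ^ ((1:ℝ)/6) := by
          gcongr
          exact hG n
  -- Step D : conclusion
  have hU : Tendsto (fun n =>
      (ENNReal.ofReal (18/5) * ENNReal.ofReal (d n)) ^ ((5:ℝ)/6) * C ^ ((1:ℝ)/6))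
      atTop (𝓝 0) := by
    have h1 : Tendsto (fun n => ENNReal.ofReal (d n)) atTop (𝓝 0) := by
      have := (ENNReal.continuous_ofReal.tendsto 0).comp hdtend
      simpa [Function.comp_def] using this
    have h2 : Tendsto (fun n => ENNReal.ofReal (18/5) * ENNReal.ofReal (d n)) atTop (𝓝 0) := by
      have := ENNReal.Tendsto.const_mul (a := ENNReal.ofReal (18/5)) h1
        (Or.inr ENNReal.ofReal_ne_top)
      simpa using this
    have h3 : Tendsto (fun n =>
        (ENNReal.ofReal (18/5) * ENNReal.ofReal (d n)) ^ ((5:ℝ)/6)) atTop (𝓝 0) := by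
      have := ((ENNReal.continuous_rpow_const (y := (5:ℝ)/6)).tendsto 0).comp h2
      simpa [Function.comp_def, ENNReal.zero_rpow_of_pos (by norm_num : (0:ℝ) < 5/6)] using this
    have h4 : C ^ ((1:ℝ)/6) ≠ ⊤ :=
      ENNReal.rpow_ne_top_of_nonneg (by norm_num) ENNReal.ofReal_ne_top
    have := ENNReal.Tendsto.mul_const h3 (Or.inr h4)
    simpa using this
  have hL0 : Tendsto (fun n => ∫⁻ x, (‖ρ n x - ρTF x‖₊ : ℝ≥0∞) ^ ((5:ℝ)/3))
      atTop (𝓝 0) :=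
    tendsto_of_tendsto_of_tendsto_of_le_of_le tendsto_const_nhds hU
      (fun n => bot_le) hLle
  have heq : ∀ n, eLpNorm (fun x => ρ n x - ρTF x) (5/3) volume
      = (∫⁻ x, (‖ρ n x - ρTF x‖₊ : ℝ≥0∞) ^ ((5:ℝ)/3)) ^ ((3:ℝ)/5) := by
    intro n
    rw [eLpNorm_eq_lintegral_rpow_enorm_toReal hpne0 hpnetop]
    rw [hp53]
    norm_num
    rfl
  have hfin := ((ENNReal.continuous_rpow_const (y := (3:ℝ)/5)).tendsto 0).comp hL0
  rw [show (fun n => eLpNorm (fun x => ρ n x - ρTF x) (5/3) volume)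
      = fun n => (∫⁻ x, (‖ρ n x - ρTF x‖₊ : ℝ≥0∞) ^ ((5:ℝ)/3)) ^ ((3:ℝ)/5)
    from funext heq]
  simpa [Function.comp_def, ENNReal.zero_rpow_of_pos (by norm_num : (0:ℝ) < 3/5)] using hfin
end
end
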